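/- arXiv:2601.11131 — 6 statements merged into one kernel-verified Lean document; each statement's English description precedes it below -/
import Mathlib

section
/- Let N ≥ 2 be an integer, let β be a unit in the ring Z/NZ, and let m = ord_N(β) be the multiplicative order of β. Then the following are equivalent: (i) for every prime p dividing N, the image of β in Z/pZ has multiplicative order exactly m; (ii) for every prime r dividing m, the element β^(m/r) − 1 is a unit in Z/NZ (equivalently, gcd(b − 1, N) = 1 where b ∈ [0, N) is the integer representing β^(m/r)). -/
/-!
An element of `ℤ/Nℤ` is a unit iff it is nonzero modulo every prime `p ∣ N`, so `β^(m/r) - 1` is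
a unit iff `β^(m/r) ≢ 1` modulo every such `p`. On the other hand the order of `β` modulo `p`
divides `m`, and it equals `m` iff `β^(m/r) ≢ 1` modulo `p` for every prime `r ∣ m`. The two
conditions differ only in the order of the quantifiers over `p` and `r`.
-/

theorem orderOf_eq_iff_pow_div_prime_ne_one {G : Type*} [Monoid G] {x : G} {n : ℕ} (hn : 0 < n)
    (hx : x ^ n = 1) : orderOf x = n ↔ ∀ p : ℕ, p.Prime → p ∣ n → x ^ (n / p) ≠ 1 := by
  refine ⟨?_, orderOf_eq_of_pow_and_pow_div_prime hn hx⟩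
  rintro rfl p hp hpn
  exact pow_ne_one_of_lt_orderOf (Nat.div_pos (Nat.le_of_dvd hn hpn) hp.pos).ne'
    (Nat.div_lt_self hn hp.one_lt)

theorem ZMod.isUnit_iff_forall_prime_castHom_ne_zero {N : ℕ} (x : ZMod N) :
    IsUnit x ↔ ∀ (p : ℕ) (_ : p.Prime) (hpN : p ∣ N), ZMod.castHom hpN (ZMod p) x ≠ 0 := by
  obtain ⟨z, rfl⟩ : ∃ z : ℤ, (z : ZMod N) = x := ⟨_, ZMod.intCast_zmod_cast x⟩
  rw [ZMod.coe_int_isUnit_iff_isCoprime, Int.isCoprime_iff_nat_coprime, Int.natAbs_natCast,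
    ← not_iff_not, Nat.Prime.not_coprime_iff_dvd]
  simp [ZMod.intCast_zmod_eq_zero_iff_dvd, Int.natCast_dvd]

theorem order_eq_mod_all_primes_iff_isUnit_general (N : ℕ) (β : (ZMod N)ˣ)
    (m : ℕ) (hm : m = orderOf β) :
    (∀ (p : ℕ) (_ : p.Prime) (hpN : p ∣ N),
        orderOf (ZMod.castHom hpN (ZMod p) (β : ZMod N)) = m) ↔
      (∀ r : ℕ, r.Prime → r ∣ m → IsUnit ((β : ZMod N) ^ (m / r) - 1)) := by
  have hm0 : 0 < m := hm ▸ orderOf_pos β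
  have hβm : (β : ZMod N) ^ m = 1 := by
    rw [hm, ← Units.val_pow_eq_pow_val, pow_orderOf_eq_one, Units.val_one]
  have orderOf_image_iff (p : ℕ) (hpN : p ∣ N) :
      orderOf (ZMod.castHom hpN (ZMod p) (β : ZMod N)) = m ↔
        ∀ r : ℕ, r.Prime → r ∣ m → ZMod.castHom hpN (ZMod p) (β : ZMod N) ^ (m / r) ≠ 1 :=
    orderOf_eq_iff_pow_div_prime_ne_one hm0 (by rw [← map_pow, hβm, map_one])
  simp_rw [ZMod.isUnit_iff_forall_prime_castHom_ne_zero, map_sub, map_pow, map_one, sub_ne_zero]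
  exact ⟨fun h r hr hrm p hp hpN => (orderOf_image_iff p hpN).1 (h p hp hpN) r hr hrm,
    fun h p hp hpN => (orderOf_image_iff p hpN).2 fun r hr hrm => h r hr hrm p hp hpN⟩

/-- Lemma 2.4 (porder): for `N ≥ 2` and a unit `β` of `ℤ/Nℤ` with multiplicative
order `m`, the order of the image of `β` mod every prime `p ∣ N` equals `m`
iff `β^(m/r) - 1` is a unit in `ℤ/Nℤ` for every prime `r ∣ m`. -/
theorem order_eq_mod_all_primes_iff_isUnit (N : ℕ) (hN : 2 ≤ N) (β : (ZMod N)ˣ)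
    (m : ℕ) (hm : m = orderOf β) :
    (∀ (p : ℕ) (_ : p.Prime) (hpN : p ∣ N),
        orderOf (ZMod.castHom hpN (ZMod p) (β : ZMod N)) = m) ↔
      (∀ r : ℕ, r.Prime → r ∣ m → IsUnit ((β : ZMod N) ^ (m / r) - 1)) :=
  order_eq_mod_all_primes_iff_isUnit_general N β m hm
end

section
/- Let p be a prime and let B and M be positive integers with B < p. Suppose that β^M ≡ 1 (mod p) for every integer β with 1 ≤ β ≤ B. Then every B-smooth positive integer n satisfies n^M ≡ 1 (mod p), and consequently Ψ(p, B) ≤ M. -/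
/-!
A `B`-smooth number is a product of primes `q ≤ B`, each of which is an `M`-th root of unity
modulo `p`, so it is one too. A `B`-smooth `n ≤ p` is in fact `< p` (as `p > B` is prime), so
these numbers are distinct modulo `p`; but the field `ZMod p` has at most `M` roots of
`X ^ M - 1`.
-/

theorem Nat.pow_modEq_one_of_forall_prime_dvd_le {p B M n : ℕ}
    (hprime : ∀ q : ℕ, q.Prime → q ≤ B → q ^ M ≡ 1 [MOD p]) (hn : n ≠ 0)
    (hsmooth : ∀ q : ℕ, q.Prime → q ∣ n → q ≤ B) : n ^ M ≡ 1 [MOD p] := by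
  induction n using induction_on_primes with
  | zero => exact absurd rfl hn
  | one => rw [one_pow]
  | prime_mul q m hq ih =>
    have hq_pow : q ^ M ≡ 1 [MOD p] := hprime q hq (hsmooth q hq (dvd_mul_right q m))
    have hm_pow : m ^ M ≡ 1 [MOD p] :=
      ih (right_ne_zero_of_mul hn) fun r hr hrm => hsmooth r hr (hrm.mul_left q)
    simpa [mul_pow] using hq_pow.mul hm_pow

theorem Polynomial.card_nthRootsFinset_le {R : Type*} [CommRing R] [IsDomain R] (n : ℕ) (a : R) :
    (nthRootsFinset n a).card ≤ n := by
  classical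
  rw [nthRootsFinset_def]
  exact (Multiset.toFinset_card_le _).trans (card_nthRoots n a)

theorem ZMod.natCast_injOn_Iio (n : ℕ) : Set.InjOn (Nat.cast : ℕ → ZMod n) (Set.Iio n) :=
  fun a ha b hb hab => by
    simpa [ZMod.val_cast_of_lt ha, ZMod.val_cast_of_lt hb] using congrArg ZMod.val hab

theorem Nat.ncard_le_of_forall_lt_of_pow_modEq_one {p M : ℕ} (hp : p.Prime) (hM : 0 < M)
    {S : Set ℕ} (hlt : ∀ n ∈ S, n < p) (hpow : ∀ n ∈ S, n ^ M ≡ 1 [MOD p]) :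
    S.ncard ≤ M := by
  have : Fact p.Prime := ⟨hp⟩
  have hmaps : ∀ n ∈ S, (n : ZMod p) ∈ (Polynomial.nthRootsFinset M (1 : ZMod p) : Set _) := by
    intro n hn
    rw [Finset.mem_coe, Polynomial.mem_nthRootsFinset hM, ← Nat.cast_pow, ← Nat.cast_one,
      ZMod.natCast_eq_natCast_iff]
    exact hpow n hn
  calc S.ncard
      ≤ (Polynomial.nthRootsFinset M (1 : ZMod p) : Set (ZMod p)).ncard :=
        Set.ncard_le_ncard_of_injOn _ hmaps ((ZMod.natCast_injOn_Iio p).mono hlt)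
    _ ≤ M := by
        rw [Set.ncard_coe_finset]
        exact Polynomial.card_nthRootsFinset_le M 1

theorem smooth_pow_eq_one_and_count_le_general (p B M : ℕ) (hp : p.Prime)
    (hM : 0 < M) (hBp : B < p)
    (h : ∀ β : ℕ, 1 ≤ β → β ≤ B → β ^ M ≡ 1 [MOD p]) :
    (∀ n : ℕ, 0 < n → (∀ q : ℕ, q.Prime → q ∣ n → q ≤ B) → n ^ M ≡ 1 [MOD p]) ∧
      Nat.card {n : ℕ | 0 < n ∧ n ≤ p ∧ ∀ q : ℕ, q.Prime → q ∣ n → q ≤ B} ≤ M := by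
  have hsmooth : ∀ n : ℕ, 0 < n → (∀ q : ℕ, q.Prime → q ∣ n → q ≤ B) → n ^ M ≡ 1 [MOD p] :=
    fun n hn hs => Nat.pow_modEq_one_of_forall_prime_dvd_le
      (fun q hq hqB => h q hq.one_lt.le hqB) hn.ne' hs
  refine ⟨hsmooth, ?_⟩
  rw [Nat.card_coe_set_eq]
  refine Nat.ncard_le_of_forall_lt_of_pow_modEq_one hp hM ?_ fun n ⟨hn, _, hs⟩ => hsmooth n hn hs
  rintro n ⟨-, hnp, hs⟩
  exact hnp.lt_of_ne fun hn => (hs p hp (hn ▸ dvd_rfl)).not_gt hBp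

/-- If `p` is prime, `0 < B < p`, `0 < M`, and `β^M ≡ 1 (mod p)` for all
`1 ≤ β ≤ B`, then every `B`-smooth positive integer `n` satisfies
`n^M ≡ 1 (mod p)`, and consequently `Ψ(p, B) ≤ M`. -/
theorem smooth_pow_eq_one_and_count_le (p B M : ℕ) (hp : p.Prime)
    (hB : 0 < B) (hM : 0 < M) (hBp : B < p)
    (h : ∀ β : ℕ, 1 ≤ β → β ≤ B → β ^ M ≡ 1 [MOD p]) :
    (∀ n : ℕ, 0 < n → (∀ q : ℕ, q.Prime → q ∣ n → q ≤ B) → n ^ M ≡ 1 [MOD p]) ∧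
      Nat.card {n : ℕ | 0 < n ∧ n ≤ p ∧ ∀ q : ℕ, q.Prime → q ∣ n → q ≤ B} ≤ M :=
  smooth_pow_eq_one_and_count_le_general p B M hp hM hBp h
end

section
/- There exists an integer D₀ such that for every integer D ≥ D₀ and every integer M with B ≤ M ≤ D, where B = ⌈D^(1/3)⌉, the real number Z̃ = 2M · (log 2M)^((log 2M)/(−1 + log B)) satisfies M < Z̃ / (log Z̃)^(log Z̃ / log B) < 4M. -/
private lemma log_le_four_rpow {x : ℝ} (hx : 0 < x) :
    Real.log x ≤ 4 * x ^ ((1:ℝ)/4) := by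
  have h1 : Real.log (x ^ ((1:ℝ)/4)) = (1/4) * Real.log x := by
    rw [Real.log_rpow hx]
  have h2 : Real.log (x ^ ((1:ℝ)/4)) ≤ x ^ ((1:ℝ)/4) - 1 :=
    Real.log_le_sub_one_of_pos (Real.rpow_pos_of_pos hx _)
  linarith

set_option maxHeartbeats 1000000 in
/-- For all sufficiently large `D`, with `B = ⌈D^(1/3)⌉` and any integer `M`
with `B ≤ M ≤ D`, the quantity `Z̃ = 2M · (log 2M)^((log 2M)/(-1 + log B))`
satisfies `M < Z̃ / (log Z̃)^(log Z̃ / log B) < 4M`. -/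
theorem Ztilde_sandwich :
    ∃ D₀ : ℕ, ∀ D : ℕ, D₀ ≤ D → ∀ B M : ℕ,
      B = ⌈(D : ℝ) ^ ((1 : ℝ) / 3)⌉₊ → B ≤ M → M ≤ D →
      ∀ Z : ℝ,
        Z = 2 * M * Real.log (2 * M) ^ (Real.log (2 * M) / (-1 + Real.log B)) →
        (M : ℝ) < Z / Real.log Z ^ (Real.log Z / Real.log B) ∧
          Z / Real.log Z ^ (Real.log Z / Real.log B) < 4 * M := by
  refine ⟨⌈Real.exp 12000000⌉₊, fun D hD B M hBdef hBM hMD Z hZ => ?_⟩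
  have hD1 : Real.exp 12000000 ≤ (D : ℝ) :=
    le_trans (Nat.le_ceil _) (by exact_mod_cast hD)
  have hDpos : (0:ℝ) < D := lt_of_lt_of_le (Real.exp_pos _) hD1
  have hlogD : (12000000 : ℝ) ≤ Real.log D := by
    have h := Real.log_le_log (Real.exp_pos _) hD1
    rwa [Real.log_exp] at h
  have hB1 : (D:ℝ) ^ ((1:ℝ)/3) ≤ (B:ℝ) := by
    rw [hBdef]; exact Nat.le_ceil _
  have hBpos : (0:ℝ) < (B:ℝ) := lt_of_lt_of_le (Real.rpow_pos_of_pos hDpos _) hB1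
  set b := Real.log (B:ℝ) with hbdef
  have hb : (4000000 : ℝ) ≤ b := by
    have h := Real.log_le_log (Real.rpow_pos_of_pos hDpos _) hB1
    rw [Real.log_rpow hDpos] at h
    linarith
  have hbpos : (0:ℝ) < b := by linarith
  have hlogD3 : Real.log D ≤ 3 * b := by
    have h2 : ((D:ℝ) ^ ((1:ℝ)/3)) ^ (3:ℝ) = (D:ℝ) := by
      rw [← Real.rpow_mul hDpos.le]; norm_num
    have h1 : (D:ℝ) ≤ (B:ℝ) ^ (3:ℝ) := by
      rw [← h2]
      exact Real.rpow_le_rpow (Real.rpow_pos_of_pos hDpos _).le hB1 (by norm_num)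
    have h3 := Real.log_le_log hDpos h1
    rwa [Real.log_rpow hBpos] at h3
  have hMpos : (0:ℝ) < (M:ℝ) :=
    lt_of_lt_of_le hBpos (by exact_mod_cast hBM)
  have h2M : (0:ℝ) < 2 * (M:ℝ) := by linarith
  set L := Real.log (2 * (M:ℝ)) with hLdef
  have hlog2M : L = Real.log 2 + Real.log M :=
    Real.log_mul (by norm_num) (ne_of_gt hMpos)
  have hlog2 : (0.6931471803:ℝ) < Real.log 2 := Real.log_two_gt_d9
  have hlog2' : Real.log 2 < 0.6931471808 := Real.log_two_lt_d9
  have hLlb : b + Real.log 2 ≤ L := by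
    have h := Real.log_le_log hBpos (show (B:ℝ) ≤ (M:ℝ) by exact_mod_cast hBM)
    linarith
  have hLub : L ≤ Real.log 2 + 3 * b := by
    have h := Real.log_le_log hMpos (show (M:ℝ) ≤ (D:ℝ) by exact_mod_cast hMD)
    linarith
  have hbL : b < L := by linarith
  have hLpos : (0:ℝ) < L := by linarith
  have hL4 : L ≤ 4 * b := by linarith
  set l := Real.log L with hldef
  have hL1 : (1:ℝ) < L := by linarith
  have hlpos : (0:ℝ) < l := Real.log_pos hL1
  set s := b ^ ((1:ℝ)/4) with hsdef
  have hspos : (0:ℝ) < s := Real.rpow_pos_of_pos hbpos _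
  have hs4 : s ^ (4:ℕ) = b := by
    rw [hsdef, ← Real.rpow_natCast (b ^ ((1:ℝ)/4)) 4, ← Real.rpow_mul hbpos.le]
    norm_num
  have hs40 : (40:ℝ) ≤ s := by
    by_contra h
    push_neg at h
    have h4 : s ^ (4:ℕ) < 40 ^ (4:ℕ) := pow_lt_pow_left₀ h hspos.le (by norm_num)
    rw [hs4] at h4
    norm_num at h4
    linarith
  have hls : l ≤ 8 * s := by
    have h1 : l ≤ Real.log (4 * b) := Real.log_le_log hLpos (by linarith)
    have h2 : Real.log (4 * b) = Real.log 4 + Real.log b :=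
      Real.log_mul (by norm_num) (ne_of_gt hbpos)
    have h3 : Real.log b ≤ 4 * s := by
      rw [hsdef]; exact log_le_four_rpow hbpos
    have h4 : Real.log 4 ≤ 3 := by
      have := Real.log_le_sub_one_of_pos (show (0:ℝ) < 4 by norm_num); linarith
    linarith
  have hb1 : (0:ℝ) < b - 1 := by linarith
  have hb1half : s ^ (4:ℕ) / 2 ≤ b - 1 := by rw [hs4]; linarith
  set e := l / (b - 1) with hedef
  have hepos : (0:ℝ) < e := div_pos hlpos hb1
  have hs3 : (64000:ℝ) ≤ s ^ 3 := by
    have h := pow_le_pow_left₀ (by norm_num : (0:ℝ) ≤ 40) hs40 3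
    norm_num at h
    linarith
  have he16 : e ≤ 16 / s ^ 3 := by
    have h1 : e ≤ (8 * s) / (s ^ (4:ℕ) / 2) :=
      div_le_div₀ (by positivity) hls (by positivity) hb1half
    have h2 : (8 * s) / (s ^ (4:ℕ) / 2) = 16 / s ^ 3 := by
      field_simp; ring
    linarith
  have he1 : e ≤ 1 / 4000 := by
    have h3 : (16:ℝ) / s ^ 3 ≤ 16 / 64000 :=
      div_le_div_of_nonneg_left (by norm_num) (by norm_num) hs3
    have : (16:ℝ) / 64000 = 1 / 4000 := by norm_num
    linarith
  have hel : e * l ≤ 0.08 := by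
    have h1 : e * l ≤ (16 / s ^ 3) * (8 * s) :=
      mul_le_mul he16 hls hlpos.le (by positivity)
    have h2 : (16 / s ^ 3) * (8 * s) = 128 / s ^ 2 := by
      field_simp; ring
    have hs2 : (1600:ℝ) ≤ s ^ 2 := by nlinarith
    have h3 : (128:ℝ) / s ^ 2 ≤ 128 / 1600 :=
      div_le_div_of_nonneg_left (by norm_num) (by norm_num) hs2
    have : (128:ℝ) / 1600 = 0.08 := by norm_num
    linarith
  have he2 : e ^ 2 ≤ e := by nlinarith
  -- Z and its logarithm
  have hrpos : (0:ℝ) < L ^ (L / (-1 + b)) := Real.rpow_pos_of_pos hLpos _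
  have hZpos : (0:ℝ) < Z := by
    rw [hZ]; exact mul_pos h2M hrpos
  have hlogZ : Real.log Z = L + L * l / (b - 1) := by
    rw [hZ, Real.log_mul (ne_of_gt h2M) (ne_of_gt hrpos), Real.log_rpow hLpos,
      ← hLdef, ← hldef, div_mul_eq_mul_div, show (-1 + b) = b - 1 from by ring]
  set W := Real.log Z with hWdef
  have hW : W = L * (1 + e) := by
    rw [hlogZ, hedef]
    field_simp
  have hW' : W = L + L * e := by rw [hW]; ring
  have hWpos : (0:ℝ) < W := by
    rw [hW]; exact mul_pos hLpos (by linarith)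
  have h1e : (0:ℝ) < 1 + e := by linarith
  have hlogW : Real.log W = l + Real.log (1 + e) := by
    rw [hW, Real.log_mul (ne_of_gt hLpos) (ne_of_gt h1e), ← hldef]
  set d := Real.log (1 + e) with hddef
  have hd0 : (0:ℝ) ≤ d := Real.log_nonneg (by linarith)
  have hde : d ≤ e := by
    have := Real.log_le_sub_one_of_pos h1e
    linarith
  -- rewrite the target expression as an exponential
  have hexpr : Z / W ^ (W / b) = Real.exp (W - Real.log W * (W / b)) := by
    rw [Real.rpow_def_of_pos hWpos, ← Real.exp_log hZpos, ← Real.exp_sub]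
  have hWL : L ≤ W := by
    have h := mul_pos hLpos hepos
    linarith only [hW', h]
  -- upper bound for T := log W * (W/b)
  have hTdef : Real.log W * (W / b) = (l + d) * (W / b) := by rw [hlogW]
  have hTub : (l + d) * (W / b) ≤ L * e + 4 * (e + e * l + e ^ 2) := by
    have h1 : (l + d) * (W / b) ≤ (l + e) * (W / b) :=
      mul_le_mul_of_nonneg_right (by linarith) (by positivity)
    have h2 : (l + e) * (W / b) = L * l / b + (L / b) * (e + e * l + e ^ 2) := by
      rw [hW]; field_simp; ring
    have h3 : L * l / b ≤ L * l / (b - 1) :=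
      div_le_div_of_nonneg_left (by positivity) hb1 (by linarith)
    have hE : L * l / (b - 1) = L * e := by rw [hedef]; ring
    have hLb4 : L / b ≤ 4 := by rw [div_le_iff₀ hbpos]; linarith
    have hx : (0:ℝ) ≤ e + e * l + e ^ 2 := by positivity
    have h4 : (L / b) * (e + e * l + e ^ 2) ≤ 4 * (e + e * l + e ^ 2) :=
      mul_le_mul_of_nonneg_right hLb4 hx
    linarith
  -- lower bound for T
  have hTlb : L * e - L * l / ((b - 1) * b) ≤ (l + d) * (W / b) := by
    have h1 : l * (L / b) ≤ (l + d) * (W / b) :=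
      mul_le_mul (by linarith) ((div_le_div_iff_of_pos_right hbpos).mpr hWL)
        (by positivity) (by linarith)
    have h2 : L * e = l * (L / b) + L * l / ((b - 1) * b) := by
      rw [hedef]; field_simp; ring
    linarith
  have hsmall : L * l / ((b - 1) * b) ≤ 0.001 := by
    have hnum : L * l ≤ 32 * b * s := by
      calc L * l ≤ (4 * b) * (8 * s) :=
            mul_le_mul hL4 hls hlpos.le (by positivity)
        _ = 32 * b * s := by ring
    have hden : (s ^ (4:ℕ) / 2) * b ≤ (b - 1) * b :=
      mul_le_mul_of_nonneg_right hb1half hbpos.le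
    have h1 : L * l / ((b - 1) * b) ≤ (32 * b * s) / ((s ^ (4:ℕ) / 2) * b) :=
      div_le_div₀ (by positivity) hnum (by positivity) hden
    have h2 : (32 * b * s) / ((s ^ (4:ℕ) / 2) * b) = 64 / s ^ 3 := by
      field_simp; ring
    have h3 : (64:ℝ) / s ^ 3 ≤ 64 / 64000 :=
      div_le_div_of_nonneg_left (by norm_num) (by norm_num) hs3
    have : (64:ℝ) / 64000 = 0.001 := by norm_num
    linarith
  have hnum1 : 4 * (e + e * l + e ^ 2) < Real.log 2 := by
    linarith only [hel, he1, he2, hlog2]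
  -- finish
  rw [hexpr]
  constructor
  · rw [← Real.exp_log hMpos]
    apply Real.exp_lt_exp.mpr
    have hlogM : Real.log (M:ℝ) = L - Real.log 2 := by linarith
    rw [hlogM]
    linarith [hTdef, hTub, hnum1, hW']
  · have h4M : (0:ℝ) < 4 * (M:ℝ) := by linarith
    rw [← Real.exp_log h4M]
    apply Real.exp_lt_exp.mpr
    have hlog4M : Real.log (4 * (M:ℝ)) = Real.log 2 + L := by
      rw [show (4:ℝ) * (M:ℝ) = 2 * (2 * (M:ℝ)) by ring,
        Real.log_mul (by norm_num) (ne_of_gt h2M), ← hLdef]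
    rw [hlog4M]
    have h001 : (0.001:ℝ) < Real.log 2 := by linarith
    linarith [hTdef, hTlb, hsmall, hW']
end

section
/- There exist a constant C > 0 and an integer D₀ such that the following holds for every integer D ≥ D₀. Set B = ⌈D^(1/3)⌉, and for an integer M with B ≤ M ≤ D set z = (1 + (log log 2M)/(−1 + log B)) · log 2M. Then |z · (1 − (log z)/(log B)) − log 2M| ≤ C · (log log D)² / (log D). -/
set_option maxRecDepth 8000
set_option maxHeartbeats 1000000

/-- There exist `C > 0` and `D₀` such that for all `D ≥ D₀`, with
`B = ⌈D^(1/3)⌉` and any integer `M` with `B ≤ M ≤ D`, setting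
`z = (1 + (log log 2M)/(-1 + log B)) · log 2M`, we have
`|z·(1 - (log z)/(log B)) - log 2M| ≤ C · (log log D)² / log D`. -/
theorem z_approximation :
    ∃ C : ℝ, 0 < C ∧ ∃ D₀ : ℕ, ∀ D : ℕ, D₀ ≤ D → ∀ B M : ℕ,
      B = ⌈(D : ℝ) ^ ((1 : ℝ) / 3)⌉₊ → B ≤ M → M ≤ D →
      ∀ z : ℝ,
        z = (1 + Real.log (Real.log (2 * M)) / (-1 + Real.log B)) * Real.log (2 * M) →
        |z * (1 - Real.log z / Real.log B) - Real.log (2 * M)| ≤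
          C * Real.log (Real.log D) ^ 2 / Real.log D := by
  refine ⟨288, by norm_num, 10 ^ 300, ?_⟩
  intro D hD B M hB hBM hMD z hz
  have hDR : (10:ℝ) ^ 300 ≤ (D:ℝ) := by exact_mod_cast hD
  have hDpos : (0:ℝ) < (D:ℝ) := lt_of_lt_of_le (by positivity) hDR
  set ℓ := Real.log (D:ℝ) with hℓdef
  set b := Real.log (B:ℝ) with hbdef
  set L := Real.log (2 * (M:ℝ)) with hLdef
  set a := Real.log L with hadef
  set t := Real.log ℓ with htdef
  -- ℓ ≥ 600
  have hexp600 : Real.exp 600 ≤ (D:ℝ) := by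
    have h1 : Real.exp 600 = Real.exp 1 ^ 600 := by
      rw [← Real.exp_nat_mul]; norm_num
    have h2 : Real.exp 1 ^ 600 ≤ (2.72 : ℝ) ^ 600 :=
      pow_le_pow_left₀ (Real.exp_pos 1).le
        (le_of_lt (lt_of_lt_of_le Real.exp_one_lt_d9 (by norm_num))) 600
    have h3 : (2.72 : ℝ) ^ 600 ≤ (10:ℝ) ^ 300 := by
      have : (2.72 : ℝ) ^ 600 = ((2.72 : ℝ) ^ 2) ^ 300 := by
        rw [← pow_mul]
      rw [this]
      exact pow_le_pow_left₀ (by positivity) (by norm_num) 300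
    linarith
  have hℓ : 600 ≤ ℓ := (Real.le_log_iff_exp_le hDpos).mpr hexp600
  have hD1 : (1:ℝ) ≤ (D:ℝ) := le_trans (one_le_pow₀ (by norm_num : (1:ℝ) ≤ 10)) hDR
  clear hexp600 hDR hD
  -- B bounds
  set w := (D:ℝ) ^ ((1:ℝ)/3) with hwdef
  have hw1 : (1:ℝ) ≤ w := Real.one_le_rpow (by linarith) (by norm_num)
  have hwB : w ≤ (B:ℝ) := by rw [hB]; exact Nat.le_ceil w
  have hBw : (B:ℝ) ≤ 2 * w := by
    rw [hB]
    have := Nat.ceil_lt_add_one (by positivity : (0:ℝ) ≤ w)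
    linarith
  have hlogw : Real.log w = ℓ / 3 := by
    rw [hwdef, Real.log_rpow hDpos]; ring
  have hBpos : (0:ℝ) < (B:ℝ) := lt_of_lt_of_le (by linarith) hwB
  have hb1 : ℓ / 3 ≤ b := by
    rw [← hlogw]; exact Real.log_le_log (by linarith) hwB
  have hb2 : b ≤ ℓ / 3 + 1 := by
    have h1 : b ≤ Real.log (2 * w) := Real.log_le_log hBpos hBw
    have h2 : Real.log (2 * w) = Real.log 2 + Real.log w :=
      Real.log_mul (by norm_num) (by linarith)
    have h3 : Real.log 2 < 0.6931471808 := Real.log_two_lt_d9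
    rw [h2, hlogw] at h1; linarith
  -- L bounds
  have hMpos : (0:ℝ) < (M:ℝ) := by
    have : (B:ℝ) ≤ (M:ℝ) := by exact_mod_cast hBM
    linarith
  have hL1 : b ≤ L := by
    apply Real.log_le_log hBpos
    have : (B:ℝ) ≤ (M:ℝ) := by exact_mod_cast hBM
    linarith
  have hL2 : L ≤ 1 + ℓ := by
    have hMD' : (M:ℝ) ≤ (D:ℝ) := by exact_mod_cast hMD
    have h1 : L ≤ Real.log (2 * (D:ℝ)) :=
      Real.log_le_log (by linarith) (by linarith)
    have h2 : Real.log (2 * (D:ℝ)) = Real.log 2 + ℓ :=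
      Real.log_mul (by norm_num) (by linarith)
    have h3 : Real.log 2 < 0.6931471808 := Real.log_two_lt_d9
    rw [h2] at h1; linarith
  have hL0 : (200:ℝ) ≤ L := by linarith
  have hL2' : L ≤ 2 * ℓ := by linarith
  -- a and t bounds
  have hexp1 : Real.exp 1 < 2.7182818286 := Real.exp_one_lt_d9
  have ha1 : 1 ≤ a := by
    rw [hadef]
    apply (Real.le_log_iff_exp_le (by linarith)).mpr
    linarith
  have ht1 : 1 ≤ t := by
    rw [htdef]
    apply (Real.le_log_iff_exp_le (by linarith)).mpr
    linarith
  have hlogsq : Real.log (ℓ ^ 2) = 2 * t := by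
    rw [Real.log_pow]; push_cast; ring
  have hll : 2 * ℓ ≤ ℓ ^ 2 := by
    have := mul_nonneg (show (0:ℝ) ≤ ℓ - 2 by linarith) (show (0:ℝ) ≤ ℓ by linarith)
    linarith [this]
  have ha2 : a ≤ 2 * t := by
    rw [← hlogsq, hadef]
    apply Real.log_le_log (by linarith)
    linarith
  have ha3 : a ≤ ℓ / 4 := by
    have h16 : ℓ / 16 ≤ Real.exp (ℓ / 16) := by
      have := Real.add_one_le_exp (ℓ / 16); linarith
    have hp : (ℓ / 16) ^ 4 ≤ Real.exp (ℓ / 16) ^ 4 :=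
      pow_le_pow_left₀ (by linarith) h16 4
    have hee : Real.exp (ℓ / 16) ^ 4 = Real.exp (ℓ / 4) := by
      rw [← Real.exp_nat_mul]; congr 1; push_cast; ring
    have hsq : ℓ ^ 2 ≤ Real.exp (ℓ / 4) := by
      rw [← hee]
      have h360 : (360000:ℝ) ≤ ℓ ^ 2 := by
        have := mul_le_mul hℓ hℓ (by norm_num) (by linarith)
        linarith [this]
      have h4 : ℓ ^ 2 * 65536 ≤ ℓ ^ 2 * ℓ ^ 2 :=
        mul_le_mul_of_nonneg_left (by linarith) (sq_nonneg ℓ)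
      linarith [hp, h4]
    have h1 : a ≤ Real.log (ℓ ^ 2) := by
      rw [hadef]
      apply Real.log_le_log (by linarith)
      linarith
    have h2 : Real.log (ℓ ^ 2) ≤ Real.log (Real.exp (ℓ / 4)) :=
      Real.log_le_log (by positivity) hsq
    rw [Real.log_exp] at h2
    linarith
  -- b - 1 bounds
  have hbm : ℓ / 4 ≤ b - 1 := by linarith
  have hbm0 : (0:ℝ) < b - 1 := by linarith
  have hb0 : (0:ℝ) < b := by linarith
  set x := a / (b - 1) with hxdef
  have hx0 : 0 < x := div_pos (by linarith) hbm0
  have hx1 : x ≤ 1 := (div_le_one hbm0).mpr (by linarith)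
  have hzval : z = (1 + x) * L := by
    rw [hz, hxdef]; ring
  have hz0 : 0 < z := by rw [hzval]; exact mul_pos (by linarith) (by linarith)
  set ε := Real.log (1 + x) with hεdef
  have hε0 : 0 ≤ ε := Real.log_nonneg (by linarith)
  have hε1 : ε ≤ x := by
    have := Real.log_le_sub_one_of_pos (show (0:ℝ) < 1 + x by linarith)
    rw [hεdef]; linarith
  have hεb : (b - 1) * ε ≤ a := by
    have h1 : (b - 1) * ε ≤ (b - 1) * x := mul_le_mul_of_nonneg_left hε1 hbm0.le
    have h2 : (b - 1) * x = a := by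
      rw [hxdef]; field_simp
    linarith
  have hlogz : Real.log z = ε + a := by
    rw [hzval, Real.log_mul (by linarith) (by linarith), hεdef, hadef]
  set N := a - (b - 1) * ε - a ^ 2 - a * ε with hNdef
  clear_value N ε x t a L b w ℓ
  have hE : z * (1 - Real.log z / b) - L = L * N / (b * (b - 1)) := by
    rw [hlogz, hzval, hNdef, hxdef]
    field_simp [hb0.ne', hbm0.ne']
    ring
  have haa : a ≤ a ^ 2 := by linarith [sq_nonneg (a - 1)]
  have hN1 : N ≤ 3 * a ^ 2 := by
    have h1 : 0 ≤ (b - 1) * ε := mul_nonneg hbm0.le hε0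
    have h2 : 0 ≤ a * ε := mul_nonneg (by linarith) hε0
    rw [hNdef]; linarith
  have hN2 : -(3 * a ^ 2) ≤ N := by
    have h2 : a * ε ≤ a * 1 :=
      mul_le_mul_of_nonneg_left (le_trans hε1 hx1) (by linarith)
    rw [hNdef]; linarith [hεb]
  have habs : |N| ≤ 3 * a ^ 2 := abs_le.mpr ⟨hN2, hN1⟩
  have habs12 : |N| ≤ 12 * t ^ 2 := by
    have h1 : a * a ≤ (2 * t) * (2 * t) :=
      mul_le_mul ha2 ha2 (by linarith) (by linarith)
    linarith [habs, h1]
  rw [hE, abs_div, abs_mul, abs_of_pos (by linarith : (0:ℝ) < L),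
    abs_of_pos (mul_pos hb0 hbm0)]
  have hnum : L * |N| ≤ 24 * ℓ * t ^ 2 := by
    have h1 : L * |N| ≤ (2 * ℓ) * (12 * t ^ 2) :=
      mul_le_mul hL2' habs12 (abs_nonneg N) (by linarith)
    linarith [h1]
  have hden : ℓ ^ 2 / 12 ≤ b * (b - 1) := by
    have h1 : (ℓ / 3) * (ℓ / 4) ≤ b * (b - 1) :=
      mul_le_mul hb1 hbm (by linarith) (by linarith)
    linarith [h1]
  have key : L * |N| / (b * (b - 1)) ≤ (24 * ℓ * t ^ 2) / (ℓ ^ 2 / 12) :=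
    div_le_div₀ (mul_nonneg (by linarith : (0:ℝ) ≤ 24 * ℓ) (sq_nonneg t)) hnum
      (div_pos (pow_pos (by linarith) 2) (by norm_num)) hden
  have hℓ0 : ℓ ≠ 0 := by linarith
  have heq : (24 * ℓ * t ^ 2) / (ℓ ^ 2 / 12) = 288 * t ^ 2 / ℓ := by
    field_simp
    ring
  rw [heq] at key
  exact key
end

section
/- There exists an integer D₀ such that the following holds for every integer D ≥ D₀. Set B = ⌈D^(1/3)⌉, let M be an integer with B ≤ M ≤ D, and set Z̃ = 2M · (log 2M)^((log 2M)/(−1 + log B)). If p is a prime with Ψ(p, B) ≤ M, then p ≤ Z̃ + 2. -/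
open Finset Filter Real

/-- `Ψ x B` is the number of positive integers `n ≤ x` all of whose prime
factors `q` satisfy `q ≤ B`. -/
noncomputable def PsiNat (x B : ℕ) : ℕ :=
  Nat.card {n : ℕ | 0 < n ∧ n ≤ x ∧ ∀ q : ℕ, q.Prime → q ∣ n → q ≤ B}

/-- number of primes ≤ n -/
noncomputable def pc (n : ℕ) : ℕ := ((Finset.range (n+1)).filter Nat.Prime).card

lemma pc_le (n : ℕ) : pc n ≤ n := by
  classical
  have : ((Finset.range (n+1)).filter Nat.Prime) ⊆ Finset.Ioc 1 n := by
    intro q hq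
    simp only [Finset.mem_filter, Finset.mem_range] at hq
    exact Finset.mem_Ioc.2 ⟨hq.2.one_lt, by omega⟩
  calc pc n ≤ (Finset.Ioc 1 n).card := Finset.card_le_card this
  _ ≤ n := by simp

lemma pc_mono : Monotone pc := fun a b h => by
  apply Finset.card_le_card
  apply Finset.filter_subset_filter
  exact Finset.range_subset_range.2 (by omega)

-- central binom bound: centralBinom m ≤ (2m)^(pc (2m))
lemma centralBinom_le_pow (m : ℕ) (hm : 1 ≤ m) :
    Nat.centralBinom m ≤ (2*m) ^ (pc (2*m)) := by
  classical
  rw [← Nat.prod_pow_factorization_centralBinom m]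
  calc ∏ p ∈ Finset.range (2*m+1), p ^ (Nat.centralBinom m).factorization p
      ≤ ∏ p ∈ (Finset.range (2*m+1)).filter Nat.Prime, (2*m) := by
        rw [Finset.prod_filter]
        apply Finset.prod_le_prod'
        intro p hp
        by_cases hpp : p.Prime
        · simp only [hpp, if_true]
          exact Nat.pow_factorization_choose_le (by omega)
        · rw [Nat.factorization_eq_zero_of_not_prime _ hpp]
          simp [hpp]
  _ = (2*m) ^ (pc (2*m)) := by rw [Finset.prod_const]; rfl

lemma cheb (n : ℕ) (hn : 8 ≤ n) :
    Real.log 2 * (n - 1) - Real.log n ≤ (pc n : ℝ) * Real.log n := by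
  set m := n / 2 with hm
  have hm4 : 4 ≤ m := by omega
  have h2m : 2 * m ≤ n := by omega
  have h2m' : n ≤ 2 * m + 1 := by omega
  -- natural number inequality
  have key : 4 ^ m ≤ (2*m) ^ (pc (2*m) + 1) := by
    calc 4 ^ m ≤ m * Nat.centralBinom m := (Nat.four_pow_lt_mul_centralBinom m hm4).le
    _ ≤ (2*m) * (2*m) ^ (pc (2*m)) := by
        apply Nat.mul_le_mul (by omega) (centralBinom_le_pow m (by omega))
    _ = (2*m) ^ (pc (2*m) + 1) := by ring
  -- pass to reals
  have hkey : (m : ℝ) * Real.log 4 ≤ (pc (2*m) + 1) * Real.log (2*m) := by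
    have h1 : Real.log (4 ^ m) ≤ Real.log ((2*m) ^ (pc (2*m) + 1)) := by
      apply Real.log_le_log (by positivity)
      exact_mod_cast key
    rw [Real.log_pow, Real.log_pow] at h1
    push_cast at h1
    linarith
  have hlog2m_pos : (0:ℝ) < Real.log (2*m) := by
    apply Real.log_pos
    exact_mod_cast (by omega : (1:ℕ) < 2*m)
  have hlogn_pos : (0:ℝ) < Real.log n := by
    apply Real.log_pos
    exact_mod_cast (by omega : (1:ℕ) < n)
  have hmono : Real.log (2*(m:ℝ)) ≤ Real.log n := by
    apply Real.log_le_log (by positivity)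
    exact_mod_cast h2m
  have hpc : pc (2*m) ≤ pc n := pc_mono h2m
  have hlog4 : Real.log 4 = 2 * Real.log 2 := by
    rw [show (4:ℝ) = 2^2 by norm_num, Real.log_pow]; push_cast; ring
  have c1 : (pc (2*m) : ℝ) * Real.log (2*m) ≤ (pc n : ℝ) * Real.log n :=
    mul_le_mul (by exact_mod_cast hpc) (by push_cast; linarith) hlog2m_pos.le (by positivity)
  have c2 : ((n:ℝ) - 1) * Real.log 2 ≤ (m:ℝ) * Real.log 4 := by
    rw [hlog4]
    have : (n:ℝ) - 1 ≤ 2*m := by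
      have : (n:ℝ) ≤ 2*m+1 := by exact_mod_cast h2m'
      linarith
    nlinarith [Real.log_pos (show (1:ℝ)<2 by norm_num)]
  have c3 : Real.log (2*(m:ℝ)) ≤ Real.log n := hmono
  have := hkey
  push_cast at this c1 ⊢
  nlinarith

lemma card_primes_Ioc (V Y : ℕ) (h : V ≤ Y) :
    ((Finset.Ioc V Y).filter Nat.Prime).card = pc Y - pc V := by
  classical
  have hsub : (Finset.range (V+1)).filter Nat.Prime ⊆ (Finset.range (Y+1)).filter Nat.Prime :=
    Finset.filter_subset_filter _ (by apply Finset.range_subset_range.2; omega)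
  have hset : (Finset.Ioc V Y).filter Nat.Prime
      = (Finset.range (Y+1)).filter Nat.Prime \ (Finset.range (V+1)).filter Nat.Prime := by
    ext q
    simp only [Finset.mem_filter, Finset.mem_Ioc, Finset.mem_sdiff, Finset.mem_range]
    constructor
    · rintro ⟨⟨h1, h2⟩, hq⟩; exact ⟨⟨by omega, hq⟩, by intro ⟨h3, _⟩; omega⟩
    · rintro ⟨⟨h1, hq⟩, h2⟩
      refine ⟨⟨?_, by omega⟩, hq⟩
      by_contra hc
      exact h2 ⟨by omega, hq⟩
  rw [hset, Finset.card_sdiff_of_subset hsub]; rfl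

lemma psi_lower (p B V Y k : ℕ) (hV : 1 ≤ V) (hVY : V < Y) (hYB : Y ≤ B)
    (hbound : V * Y^k ≤ p) :
    V * Nat.choose (pc Y - pc V) k ≤ PsiNat p B := by
  classical
  set P := (Finset.Ioc V Y).filter Nat.Prime with hP
  set D := (Finset.Icc 1 V) ×ˢ (P.powersetCard k) with hD
  set f : ℕ × Finset ℕ → ℕ := fun ms => ms.1 * ms.2.prod id with hf
  -- facts about members
  have hmem : ∀ ms ∈ D, ms.1 ∈ Finset.Icc 1 V ∧ ms.2 ⊆ P ∧ ms.2.card = k := by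
    intro ms hms
    rw [hD, Finset.mem_product] at hms
    obtain ⟨h1, h2⟩ := hms
    rw [Finset.mem_powersetCard] at h2
    exact ⟨h1, h2.1, h2.2⟩
  have hPel : ∀ q ∈ P, q.Prime ∧ V < q ∧ q ≤ Y := by
    intro q hq
    rw [hP, Finset.mem_filter, Finset.mem_Ioc] at hq
    exact ⟨hq.2, hq.1.1, hq.1.2⟩
  -- injectivity
  have hinj : Set.InjOn f D := by
    rintro ⟨m₁, s₁⟩ h₁ ⟨m₂, s₂⟩ h₂ heq
    obtain ⟨hm₁, hs₁, hc₁⟩ := hmem _ h₁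
    obtain ⟨hm₂, hs₂, hc₂⟩ := hmem _ h₂
    simp only [hf] at heq
    have hsub2 : ∀ (m m' : ℕ) (s s' : Finset ℕ), m ∈ Finset.Icc 1 V → m' ∈ Finset.Icc 1 V →
        s ⊆ P → s' ⊆ P → m * s.prod id = m' * s'.prod id → s ⊆ s' := by
      intro m m' s s' hm hm' hs hs' he q hq
      obtain ⟨hqp, hqV, _⟩ := hPel q (hs hq)
      have hdvd : q ∣ m' * s'.prod id := by
        rw [← he]
        exact Dvd.dvd.mul_left (Finset.dvd_prod_of_mem id hq) m
      rcases (Nat.Prime.dvd_mul hqp).1 hdvd with hqm | hqs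
      · have : q ≤ m' := Nat.le_of_dvd (by
          have := Finset.mem_Icc.1 hm'; omega) hqm
        have := Finset.mem_Icc.1 hm'
        omega
      · obtain ⟨r, hr, hqr⟩ := hqp.prime.exists_mem_finset_dvd hqs
        obtain ⟨hrp, _, _⟩ := hPel r (hs' hr)
        rwa [(Nat.prime_dvd_prime_iff_eq hqp hrp).1 hqr]
    have hseq : s₁ = s₂ :=
      Finset.Subset.antisymm (hsub2 _ _ _ _ hm₁ hm₂ hs₁ hs₂ heq)
        (hsub2 _ _ _ _ hm₂ hm₁ hs₂ hs₁ heq.symm)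
    have hprodpos : 0 < s₁.prod id := by
      apply Finset.prod_pos
      intro q hq
      exact (hPel q (hs₁ hq)).1.pos
    rw [← hseq] at heq
    have : m₁ = m₂ := Nat.eq_of_mul_eq_mul_right hprodpos heq
    simp [this, hseq]
  -- image inside the Psi set
  set T : Set ℕ := {n : ℕ | 0 < n ∧ n ≤ p ∧ ∀ q : ℕ, q.Prime → q ∣ n → q ≤ B} with hT
  have himg : ↑(D.image f) ⊆ T := by
    intro n hn
    simp only [Finset.coe_image, Set.mem_image, Finset.mem_coe] at hn
    obtain ⟨⟨m, s⟩, hms, rfl⟩ := hn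
    obtain ⟨hm, hs, hc⟩ := hmem _ hms
    have hmIcc := Finset.mem_Icc.1 hm
    have hprodpos : 0 < s.prod id := Finset.prod_pos (fun q hq => (hPel q (hs hq)).1.pos)
    refine ⟨Nat.mul_pos (by omega) hprodpos, ?_, ?_⟩
    · have h1 : s.prod id ≤ Y ^ k := by
        rw [← hc]
        apply Finset.prod_le_pow_card
        intro q hq; exact (hPel q (hs hq)).2.2
      calc m * s.prod id ≤ V * Y ^ k := Nat.mul_le_mul hmIcc.2 h1
      _ ≤ p := hbound
    · intro q hq hdvd
      rcases (Nat.Prime.dvd_mul hq).1 hdvd with h | h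
      · have : q ≤ m := Nat.le_of_dvd (by omega) h
        omega
      · obtain ⟨r, hr, hqr⟩ := hq.prime.exists_mem_finset_dvd h
        obtain ⟨hrp, _, hrY⟩ := hPel r (hs hr)
        have := (Nat.prime_dvd_prime_iff_eq hq hrp).1 hqr
        omega
  -- conclude
  have hTfin : T.Finite := by
    apply Set.Finite.subset (Set.finite_Icc 1 p)
    intro n hn
    exact Set.mem_Icc.2 ⟨hn.1, hn.2.1⟩
  have hcard : (D.image f).card = V * Nat.choose P.card k := by
    rw [Finset.card_image_of_injOn hinj, hD, Finset.card_product,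
      Finset.card_powersetCard, Nat.card_Icc]
    simp [mul_comm]
  have hPcard : P.card = pc Y - pc V := card_primes_Ioc V Y (by omega)
  have : (D.image f).card ≤ Nat.card T := by
    rw [Nat.card_coe_set_eq, ← Set.ncard_coe_finset]
    exact Set.ncard_le_ncard himg hTfin
  rw [hcard, hPcard] at this
  exact this

set_option maxHeartbeats 1000000 in
lemma floor_case (B M p k : ℕ) (a L E Z : ℝ)
    (ha : a = Real.log B) (hL : L = Real.log (2*M))
    (hE : E = Real.exp (L * Real.log L / (a-1))) (hZ : Z = 2*M*E)
    (hB8 : 8 ≤ B) (hBM : B ≤ M) (ha20 : 20 ≤ a)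
    (hk1 : 1 ≤ k) (hk3 : k ≤ 3) (hbk : ((B:ℝ))^k ≤ 2*M)
    (hcase : Z / ((B:ℝ))^k ≤ (B:ℝ)/(2*E*a^2))
    (hp : Z + 2 < p)
    (C1 : Real.log 2 * ((B:ℝ) - 1) * (2*a) ≥ ((3/5)*(B:ℝ) + 6*a)*(2*a) + B) :
    M < PsiNat p B := by
  have hBpos : (0:ℝ) < B := by
    have : (0:ℕ) < B := by omega
    exact_mod_cast this
  have hapos : (0:ℝ) < a := by linarith
  have hMpos : (0:ℕ) < M := by omega
  have hMR : (8:ℝ) ≤ (M:ℝ) := by exact_mod_cast (by omega : 8 ≤ M)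
  have hBR8 : (8:ℝ) ≤ (B:ℝ) := by exact_mod_cast hB8
  have hlog2 : (0:ℝ) < Real.log 2 := Real.log_pos (by norm_num)
  have hLlb : a + Real.log 2 ≤ L := by
    rw [hL, ha]
    have h1 : (B:ℝ) ≤ (M:ℝ) := by exact_mod_cast hBM
    have h2 : Real.log (2*(B:ℝ)) ≤ Real.log (2*M) :=
      Real.log_le_log (by linarith) (by linarith)
    rw [Real.log_mul (by norm_num) (by linarith)] at h2
    linarith
  have hL20 : (20:ℝ) ≤ L := by linarith
  set t := Real.log L with hts
  have htpos : (0:ℝ) < t := Real.log_pos (by linarith)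
  have hEpos : (0:ℝ) < E := by rw [hE]; exact Real.exp_pos _
  have hE1 : (1:ℝ) ≤ E := by
    rw [hE]
    have ha1 : (0:ℝ) < a - 1 := by linarith
    have h : (0:ℝ) ≤ L * t / (a-1) := by positivity
    exact Real.one_le_exp h
  have hZpos : (0:ℝ) < Z := by rw [hZ]; positivity
  have hkR : (1:ℝ) ≤ (k:ℝ) := by exact_mod_cast hk1
  have hka : (k:ℝ)*a ≤ L := by
    have h1 : Real.log ((B:ℝ)^k) ≤ Real.log (2*M) := Real.log_le_log (by positivity) hbk
    rw [Real.log_pow] at h1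
    rw [hL, ha]
    exact_mod_cast h1
  have hkapos : (0:ℝ) < (k:ℝ)*a := by nlinarith
  have hka1 : (1:ℝ) ≤ (k:ℝ)*a := by nlinarith
  -- E ≥ (k a)^k
  have hEk : ((k:ℝ)*a)^k ≤ E := by
    have h1 : Real.log ((k:ℝ)*a) ≤ t := Real.log_le_log hkapos hka
    have h2 : (0:ℝ) ≤ Real.log ((k:ℝ)*a) := Real.log_nonneg hka1
    have h3 : (k:ℝ) * Real.log ((k:ℝ)*a) ≤ L * t / (a-1) := by
      rw [le_div_iff₀ (by linarith : (0:ℝ) < a-1)]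
      nlinarith
    calc ((k:ℝ)*a)^k = Real.exp ((k:ℝ) * Real.log ((k:ℝ)*a)) := by
          rw [← Real.exp_log (pow_pos hkapos k), Real.log_pow]
    _ ≤ E := by rw [hE]; exact Real.exp_le_exp.2 h3
  -- the floor V
  have hBkpos : (0:ℝ) < ((B:ℝ))^k := by positivity
  set Vr := Z / ((B:ℝ))^k with hVr
  have hVrE : E ≤ Vr := by
    rw [hVr, hZ, le_div_iff₀ hBkpos]
    have h := mul_le_mul_of_nonneg_right hbk hEpos.le
    linarith only [h]
  have hVrpos : (0:ℝ) < Vr := by linarith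
  set V := ⌊Vr⌋₊ with hV
  have hV1 : 1 ≤ V := by
    rw [hV]
    apply Nat.le_floor
    push_cast
    linarith only [hVrE, hE1]
  have hVle : (V:ℝ) ≤ Vr := Nat.floor_le hVrpos.le
  have hVgt : Vr - 1 < (V:ℝ) := by
    have := Nat.lt_floor_add_one Vr
    linarith
  have hVB2 : (V:ℝ) ≤ (B:ℝ)/(2*E*a^2) := le_trans hVle hcase
  have hVBa : (V:ℝ) ≤ (B:ℝ)/(2*a^2) := by
    apply le_trans hVB2
    rw [div_le_div_iff₀ (by positivity) (by positivity)]
    have h0 : (0:ℝ) ≤ (E-1)*(2*a^2) := mul_nonneg (by linarith only [hE1]) (by positivity)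
    have h1 : 2*a^2 ≤ 2*E*a^2 := by linarith only [h0]
    linarith only [mul_le_mul_of_nonneg_left h1 hBpos.le]
  have hVltB : V < B := by
    have h1 : (V:ℝ) < (B:ℝ) := by
      have h2a : (1:ℝ) < 2*a^2 := by
        have := mul_le_mul_of_nonneg_left ha20 hapos.le
        nlinarith [this, ha20]
      have : (B:ℝ)/(2*a^2) < B := by
        rw [div_lt_iff₀ (by positivity)]
        have := mul_lt_mul_of_pos_left h2a hBpos
        linarith only [this]
      linarith only [this, hVBa]
    exact_mod_cast h1
  -- apply psi_lower
  have hbound : V * B^k ≤ p := by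
    have h1 : ((V * B^k : ℕ):ℝ) < (p:ℝ) := by
      push_cast
      have h3 := mul_le_mul_of_nonneg_right hVle hBkpos.le
      have h2 : Vr * (B:ℝ)^k = Z := by
        rw [hVr]; field_simp
      linarith only [h3, h2, hp]
    have := (Nat.cast_lt (α := ℝ)).1 h1
    omega
  have hPsi : V * Nat.choose (pc B - pc V) k ≤ PsiNat p B :=
    psi_lower p B V B k hV1 hVltB le_rfl hbound
  -- lower bound the count
  set m := pc B - pc V with hm
  have hpcVB : pc V ≤ pc B := pc_mono (le_of_lt hVltB)
  have hmcast : (m:ℝ) = (pc B : ℝ) - (pc V : ℝ) := by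
    rw [hm]; push_cast [hpcVB]; ring
  have hpcB : Real.log 2 * ((B:ℝ) - 1) - a ≤ (pc B : ℝ) * a := by
    have := cheb B hB8
    rw [← ha] at this
    linarith
  have hpcV : (pc V : ℝ) ≤ (V:ℝ) := by exact_mod_cast pc_le V
  set Q := (3/5)*(B:ℝ)/a with hQ
  have hQpos : (0:ℝ) < Q := by rw [hQ]; positivity
  have hmQ : Q + 5 ≤ (m:ℝ) := by
    have hpcV2 : (pc V:ℝ)*(2*a^2) ≤ (B:ℝ) := by
      have h := le_trans hpcV hVBa
      rw [le_div_iff₀ (by positivity : (0:ℝ) < 2*a^2)] at h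
      exact h
    have hq : (Q+5)*(2*a^2) ≤ (m:ℝ)*(2*a^2) := by
      have e1 : (m:ℝ)*(2*a^2) = ((pc B:ℝ)*a)*(2*a) - (pc V:ℝ)*(2*a^2) := by
        rw [hmcast]; ring
      have e2 : (Q+5)*(2*a^2) = ((3/5)*(B:ℝ) + 5*a)*(2*a) := by
        rw [hQ]; field_simp
      rw [e1, e2]
      have hint := mul_le_mul_of_nonneg_right hpcB (by positivity : (0:ℝ) ≤ 2*a)
      linarith only [hint, C1, hpcV2]
    exact le_of_mul_le_mul_right hq (by positivity : (0:ℝ) < 2*a^2)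
  have hkm : k ≤ m := by
    have : (k:ℝ) ≤ (m:ℝ) := by
      have : (k:ℝ) ≤ 3 := by exact_mod_cast hk3
      linarith
    exact_mod_cast this
  -- choose lower bound
  have hchoose : Q^k / (Nat.factorial k : ℝ) ≤ (Nat.choose m k : ℝ) := by
    have h1 := Nat.pow_le_choose (α := ℝ) k m
    have h2 : Q ≤ ((m + 1 - k : ℕ):ℝ) := by
      have : ((m + 1 - k : ℕ):ℝ) = (m:ℝ) + 1 - (k:ℝ) := by
        push_cast [show k ≤ m + 1 by omega]; ring
      rw [this]
      have : (k:ℝ) ≤ 3 := by exact_mod_cast hk3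
      linarith
    calc Q^k / (Nat.factorial k : ℝ) ≤ ((m + 1 - k : ℕ):ℝ)^k / (Nat.factorial k : ℝ) := by
          gcongr
    _ ≤ (Nat.choose m k : ℝ) := by exact_mod_cast h1
  -- final chain
  set Qk := Q^k / (Nat.factorial k : ℝ) with hQk
  have hQkpos : (0:ℝ) < Qk := by rw [hQk]; positivity
  have hfact1 : (1:ℝ) ≤ (Nat.factorial k : ℝ) := by
    exact_mod_cast Nat.one_le_iff_ne_zero.2 (Nat.factorial_ne_zero k)
  have hBup : (B:ℝ) ≤ 2*(M:ℝ) := by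
    calc (B:ℝ) = (B:ℝ)^1 := by ring
    _ ≤ (B:ℝ)^k := by
        apply pow_le_pow_right₀ (by linarith) hk1
    _ ≤ 2*M := hbk
  -- A: Vr * Qk ≥ 6/5 M
  have hA : (6/5)*(M:ℝ) ≤ Vr * Qk := by
    have e1 : Vr * Qk = Z*((3/5)^k/(a^k*(Nat.factorial k : ℝ))) := by
      rw [hVr, hQk, hQ]
      rw [div_pow, mul_pow, div_pow]
      field_simp
    rw [e1, hZ]
    have hpos2 : (0:ℝ) < a^k*(Nat.factorial k : ℝ) := by positivity
    have h2 : 2*(M:ℝ)*((k:ℝ)*a)^k ≤ 2*(M:ℝ)*E :=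
      mul_le_mul_of_nonneg_left hEk (by positivity)
    have hnum : (6/5:ℝ) * (Nat.factorial k : ℝ) ≤ 2*((3/5)*(k:ℝ))^k := by
      interval_cases k <;> norm_num [Nat.factorial]
    have h3 : (6/5)*(M:ℝ)*(a^k*(Nat.factorial k : ℝ)) ≤ (2*(M:ℝ)*((k:ℝ)*a)^k)*(3/5)^k := by
      have e4 : (2*(M:ℝ)*((k:ℝ)*a)^k)*(3/5)^k
          = (2*((3/5)*(k:ℝ))^k)*((M:ℝ)*a^k) := by
        rw [mul_pow, mul_pow]; ring
      rw [e4]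
      calc (6/5)*(M:ℝ)*(a^k*(Nat.factorial k : ℝ))
          = ((6/5)*(Nat.factorial k:ℝ))*((M:ℝ)*a^k) := by ring
      _ ≤ (2*((3/5)*(k:ℝ))^k)*((M:ℝ)*a^k) :=
          mul_le_mul_of_nonneg_right hnum (by positivity)
    have key := mul_le_mul_of_nonneg_right h2 (by positivity : (0:ℝ) ≤ (3/5:ℝ)^k)
    rw [← mul_div_assoc, le_div_iff₀ hpos2]
    linarith only [h3, key]
  -- B: Qk ≤ 2M/a
  have hBq : Qk ≤ 2*(M:ℝ)/a := by
    have hQle : Q ≤ (B:ℝ)/a := by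
      rw [hQ]
      have h0 : (0:ℝ) ≤ (B:ℝ)/a := by positivity
      calc (3/5)*(B:ℝ)/a = (3/5)*((B:ℝ)/a) := by ring
      _ ≤ 1*((B:ℝ)/a) := mul_le_mul_of_nonneg_right (by norm_num : (3/5:ℝ) ≤ 1) h0
      _ = (B:ℝ)/a := by ring
    have haak : a ≤ a^k := by
      calc a = a^1 := by ring
      _ ≤ a^k := pow_le_pow_right₀ (by linarith) hk1
    have h1 : Qk ≤ ((B:ℝ)/a)^k := by
      rw [hQk]
      calc Q^k/(Nat.factorial k:ℝ) ≤ Q^k := div_le_self (by positivity) hfact1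
      _ ≤ ((B:ℝ)/a)^k := pow_le_pow_left₀ hQpos.le hQle k
    have h2 : ((B:ℝ)/a)^k = (B:ℝ)^k/a^k := div_pow _ _ _
    have h3 : (B:ℝ)^k/a^k ≤ (2*(M:ℝ))/a^k := by gcongr
    have h4 : (2*(M:ℝ))/a^k ≤ 2*(M:ℝ)/a := by
      rw [div_le_div_iff₀ (by positivity) (by positivity)]
      linarith only [mul_le_mul_of_nonneg_left haak (by positivity : (0:ℝ) ≤ 2*(M:ℝ))]
    linarith only [h1, h3, h4, h2.le, h2.ge]
  -- conclude
  have expand : (Vr - 1) * Qk = Vr*Qk - Qk := by ring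
  have hfinal : (M:ℝ) < (V:ℝ) * (Nat.choose m k : ℝ) := by
    have hcount : (Vr - 1) * Qk ≤ ((V:ℝ)) * (Nat.choose m k : ℝ) :=
      mul_le_mul hVgt.le hchoose hQkpos.le (by positivity)
    have hMa : 2*(M:ℝ)/a ≤ (M:ℝ)/10 := by
      have h5 := div_le_div_of_nonneg_left (by positivity : (0:ℝ) ≤ 2*(M:ℝ))
        (by norm_num : (0:ℝ) < 20) ha20
      have h6 : 2*(M:ℝ)/20 = (M:ℝ)/10 := by ring
      linarith only [h5, h6]
    linarith only [hA, hBq, hMa, hcount, expand, hMR]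
  have hlt : M < V * Nat.choose m k := by
    have : ((M:ℕ):ℝ) < ((V * Nat.choose m k : ℕ):ℝ) := by push_cast; exact hfinal
    exact_mod_cast this
  calc M < V * Nat.choose m k := hlt
  _ ≤ PsiNat p B := hPsi

lemma keynum (K : ℕ) (h2 : 2 ≤ K) (h3 : K ≤ 3) :
    (101/100:ℝ)*(Nat.factorial K : ℝ) ≤ (8/5)*(59/100)^K*(K:ℝ)^K := by
  interval_cases K <;> norm_num [Nat.factorial]

set_option maxHeartbeats 1000000 in
lemma ceil_case (B M p k : ℕ) (a L E Z Eb : ℝ)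
    (ha : a = Real.log B) (hL : L = Real.log (2*M))
    (hE : E = Real.exp (L * Real.log L / (a-1))) (hZ : Z = 2*M*E)
    (hB8 : 8 ≤ B) (hBM : B ≤ M) (ha20 : 20 ≤ a)
    (hk1 : 1 ≤ k) (hk2 : k ≤ 2)
    (hbk1 : 2*(M:ℝ) < (B:ℝ)^(k+1))
    (hcase : (B:ℝ)^(k+1)/(2*E*a^2) < Z)
    (hp : Z + 2 < p)
    (hEEb : E ≤ Eb) (hEb1 : 1 ≤ Eb)
    (hLub : L ≤ 3*a+1)
    (Cc2 : Real.log 2 * ((B:ℝ)/(3*Eb*a^3) - 2)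
      ≥ (3/5)*((B:ℝ)/(3*Eb*a^3) - 1) + (2*Eb*a^4 + 5)*a)
    (Cc3 : (B:ℝ)/(3*Eb*a^3) ≥ 100)
    (Cc4 : (B:ℝ)/(3*Eb*a^3) ≥ 2*Eb*a^4 + 3)
    (Cc5 : (2*Real.log Eb + Real.log 2 + 2*Real.log a)*Real.log (3*a+1)/(a-1) ≤ 1/5) :
    M < PsiNat p B := by
  have hBpos : (0:ℝ) < B := by
    have : (0:ℕ) < B := by omega
    exact_mod_cast this
  have hapos : (0:ℝ) < a := by linarith
  have ha1 : (0:ℝ) < a - 1 := by linarith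
  have hMpos : (0:ℕ) < M := by omega
  have hMR : (8:ℝ) ≤ (M:ℝ) := by exact_mod_cast (by omega : 8 ≤ M)
  have hBR8 : (8:ℝ) ≤ (B:ℝ) := by exact_mod_cast hB8
  have hlog2 : (0:ℝ) < Real.log 2 := Real.log_pos (by norm_num)
  have hlog2u : Real.log 2 < 1 := by
    have := Real.log_lt_sub_one_of_pos (by norm_num : (0:ℝ) < 2) (by norm_num : (2:ℝ) ≠ 1)
    linarith
  have hLlb : a + Real.log 2 ≤ L := by
    rw [hL, ha]
    have h1 : (B:ℝ) ≤ (M:ℝ) := by exact_mod_cast hBM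
    have h2 : Real.log (2*(B:ℝ)) ≤ Real.log (2*M) :=
      Real.log_le_log (by linarith) (by linarith)
    rw [Real.log_mul (by norm_num) (by linarith)] at h2
    linarith
  have hL20 : (20:ℝ) ≤ L := by linarith
  set t := Real.log L with hts
  have htpos : (0:ℝ) < t := Real.log_pos (by linarith)
  have hEpos : (0:ℝ) < E := by rw [hE]; exact Real.exp_pos _
  have hE1 : (1:ℝ) ≤ E := by
    rw [hE]
    exact Real.one_le_exp (by positivity)
  have hZpos : (0:ℝ) < Z := by rw [hZ]; positivity
  have hlogE : Real.log E = L * t / (a-1) := by rw [hE, Real.log_exp]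
  have hEbpos : (0:ℝ) < Eb := by linarith
  set K := k + 1 with hK
  have hK2 : 2 ≤ K := by omega
  have hK3 : K ≤ 3 := by omega
  have hKR : (2:ℝ) ≤ (K:ℝ) := by exact_mod_cast hK2
  have hKpos : (0:ℝ) < (K:ℝ) := by linarith
  -- V
  set V := ⌈2*E*a^4⌉₊ with hV
  have hVlb : 2*E*a^4 ≤ (V:ℝ) := Nat.le_ceil _
  have hVub : (V:ℝ) ≤ 2*E*a^4 + 1 := (Nat.ceil_lt_add_one (by positivity)).le
  have hV1 : 1 ≤ V := by
    rw [hV]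
    apply Nat.one_le_ceil_iff.2
    positivity
  have hVpos : (0:ℝ) < (V:ℝ) := by
    have : (0:ℕ) < V := hV1
    exact_mod_cast this
  have hVubEb : (V:ℝ) ≤ 2*Eb*a^4 + 1 := by
    have : 2*E*a^4 ≤ 2*Eb*a^4 := by
      have := mul_le_mul_of_nonneg_right hEEb (by positivity : (0:ℝ) ≤ a^4)
      linarith only [this]
    linarith only [this, hVub]
  -- W and g
  set W := Z / (V:ℝ) with hW
  have hWpos : (0:ℝ) < W := by positivity
  set R := (B:ℝ)/(3*Eb*a^3) with hR
  have hRpos : (0:ℝ) < R := by positivity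
  have hR100 : (100:ℝ) ≤ R := Cc3
  -- W > R^K
  have hplaw : (1:ℝ) ≤ a^3 := one_le_pow₀ (by linarith)
  have hplaw4 : (1:ℝ) ≤ a^4 := one_le_pow₀ (by linarith)
  have hWR : R^K ≤ W := by
    have h1 : (B:ℝ)^K/(2*E*a^2) < Z := by rw [hK]; exact_mod_cast hcase
    have h2 : (2*E*a^2)*(V:ℝ) ≤ (3*Eb*a^3)^K := by
      have e1 : (3*Eb*a^3)^2 ≤ (3*Eb*a^3)^K := by
        apply pow_le_pow_right₀ ?_ hK2
        have i0 := mul_le_mul (by linarith : (1:ℝ) ≤ 3*Eb) hplaw (by norm_num) (by linarith)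
        linarith only [i0]
      have i1 : (0:ℝ) ≤ a^2 := by positivity
      have i2 : 2*E*a^2 ≤ 2*Eb*a^2 := by
        have := mul_le_mul_of_nonneg_right hEEb i1
        linarith only [this]
      have e2 : (2*E*a^2)*(V:ℝ) ≤ (2*Eb*a^2)*(2*Eb*a^4+1) :=
        mul_le_mul i2 hVubEb hVpos.le (by positivity)
      have e3 : (2*Eb*a^2)*(2*Eb*a^4+1) ≤ (3*Eb*a^3)^2 := by
        have i3 : a^2 ≤ a^6 := pow_le_pow_right₀ (by linarith) (by norm_num)
        have i4 : (2:ℝ)*Eb ≤ 5*Eb^2 := by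
          have := mul_le_mul_of_nonneg_left hEb1 (by positivity : (0:ℝ) ≤ 5*Eb)
          linarith only [this, hEbpos]
        have i5 : (2*Eb)*a^2 ≤ (5*Eb^2)*a^6 :=
          mul_le_mul i4 i3 (by positivity) (by positivity)
        have expand_l : (2*Eb*a^2)*(2*Eb*a^4+1) = 4*Eb^2*a^6 + 2*Eb*a^2 := by ring
        have expand_r : (3*Eb*a^3)^2 = 9*Eb^2*a^6 := by ring
        rw [expand_l, expand_r]
        linarith only [i5]
      linarith only [e1, e2, e3]
    have h3 : R^K = (B:ℝ)^K/(3*Eb*a^3)^K := by rw [hR, div_pow]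
    have h5 : (0:ℝ) < (2*E*a^2)*(V:ℝ) := by positivity
    have h6 : (B:ℝ)^K/(3*Eb*a^3)^K ≤ (B:ℝ)^K/((2*E*a^2)*(V:ℝ)) :=
      div_le_div_of_nonneg_left (by positivity) h5 h2
    have h7 : (B:ℝ)^K/((2*E*a^2)*(V:ℝ)) ≤ W := by
      rw [hW, div_le_div_iff₀ h5 hVpos]
      have e8 : ((B:ℝ)^K/(2*E*a^2)) * (2*E*a^2) = (B:ℝ)^K := by field_simp
      have e9 := mul_le_mul_of_nonneg_right h1.le (by positivity : (0:ℝ) ≤ 2*E*a^2)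
      rw [e8] at e9
      calc (B:ℝ)^K * (V:ℝ) ≤ (Z*(2*E*a^2))*(V:ℝ) :=
            mul_le_mul_of_nonneg_right e9 hVpos.le
      _ = Z*((2*E*a^2)*(V:ℝ)) := by ring
    rw [h3]
    exact le_trans h6 h7
  -- g = W^{1/K}
  set g := W ^ ((K:ℝ)⁻¹) with hg
  have hgpos : (0:ℝ) < g := Real.rpow_pos_of_pos hWpos _
  have hKne : ((K:ℝ)) ≠ 0 := by positivity
  have hgK : g ^ K = W := by
    rw [hg, ← Real.rpow_natCast (W ^ ((K:ℝ)⁻¹)) K, ← Real.rpow_mul hWpos.le,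
      inv_mul_cancel₀ hKne, Real.rpow_one]
  have hRg : R ≤ g := by
    have h1 : ((R^K : ℝ)) ^ ((K:ℝ)⁻¹) = R := by
      rw [← Real.rpow_natCast R K, ← Real.rpow_mul hRpos.le,
        mul_inv_cancel₀ hKne, Real.rpow_one]
    rw [hg, ← h1]
    exact Real.rpow_le_rpow (by positivity) hWR (by positivity)
  -- Y
  set Y := ⌊g⌋₊ with hY
  have hYle : (Y:ℝ) ≤ g := Nat.floor_le hgpos.le
  have hYgt : g - 1 < (Y:ℝ) := by
    have := Nat.lt_floor_add_one g
    linarith only [this]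
  have hYR : R - 2 ≤ (Y:ℝ) - 1 := by linarith only [hYgt, hRg]
  have hY8 : 8 ≤ Y := by
    have h : (8:ℝ) ≤ (Y:ℝ) := by linarith only [hYR, hR100]
    exact_mod_cast h
  have hYpos : (0:ℝ) < (Y:ℝ) := by
    have : (0:ℕ) < Y := by omega
    exact_mod_cast this
  -- Y ≤ B
  have hWB : W ≤ (B:ℝ)^K := by
    rw [hW, div_le_iff₀ hVpos]
    have h1 : Z < (B:ℝ)^K * E := by
      rw [hZ]
      have := mul_lt_mul_of_pos_right hbk1 hEpos
      calc 2*(M:ℝ)*E < (B:ℝ)^(k+1)*E := by linarith only [this]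
      _ = (B:ℝ)^K * E := by rw [hK]
    have h2 : E ≤ (V:ℝ) := by
      have i1 : E*1 ≤ E*(2*a^4) := by
        apply mul_le_mul_of_nonneg_left ?_ hEpos.le
        linarith only [hplaw4]
      have i2 : E*(2*a^4) = 2*E*a^4 := by ring
      linarith only [i1, i2, hVlb]
    have h3 : (B:ℝ)^K * E ≤ (B:ℝ)^K * (V:ℝ) :=
      mul_le_mul_of_nonneg_left h2 (by positivity)
    linarith only [h1, h3]
  have hgB : g ≤ (B:ℝ) := by
    have h1 : (((B:ℝ)^K)) ^ ((K:ℝ)⁻¹) = (B:ℝ) := by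
      rw [← Real.rpow_natCast (B:ℝ) K, ← Real.rpow_mul hBpos.le,
        mul_inv_cancel₀ hKne, Real.rpow_one]
    rw [hg, ← h1]
    exact Real.rpow_le_rpow hWpos.le hWB (by positivity)
  have hYB : Y ≤ B := by
    have h : (Y:ℝ) ≤ (B:ℝ) := le_trans hYle hgB
    exact_mod_cast h
  have hVY : V < Y := by
    have h : (V:ℝ) < (Y:ℝ) := by linarith only [hVubEb, hYR, Cc4]
    exact_mod_cast h
  -- apply psi_lower
  have hbound : V * Y^K ≤ p := by
    have h1 : ((V*Y^K : ℕ):ℝ) < (p:ℝ) := by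
      push_cast
      have h2 : (Y:ℝ)^K ≤ g^K := pow_le_pow_left₀ (by positivity) hYle K
      rw [hgK] at h2
      have h3 : (V:ℝ)*(Y:ℝ)^K ≤ (V:ℝ)*W := mul_le_mul_of_nonneg_left h2 hVpos.le
      have h4 : (V:ℝ)*W = Z := by rw [hW]; field_simp
      linarith only [h3, h4, hp]
    have := (Nat.cast_lt (α := ℝ)).1 h1
    omega
  have hPsi : V * Nat.choose (pc Y - pc V) K ≤ PsiNat p B :=
    psi_lower p B V Y K hV1 hVY hYB hbound
  -- prime counting at Y
  set m := pc Y - pc V with hm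
  have hpcVY : pc V ≤ pc Y := pc_mono hVY.le
  have hmcast : (m:ℝ) = (pc Y : ℝ) - (pc V : ℝ) := by
    rw [hm]; push_cast [hpcVY]; ring
  set lY := Real.log Y with hlY
  have hlYpos : (0:ℝ) < lY := Real.log_pos (by
    have : (1:ℕ) < Y := by omega
    exact_mod_cast this)
  have hlYa : lY ≤ a := by
    rw [hlY, ha]
    apply Real.log_le_log hYpos
    exact_mod_cast hYB
  have hchebY := cheb Y hY8
  rw [← hlY] at hchebY
  have hpcV : (pc V : ℝ) ≤ 2*Eb*a^4+1 := by
    have h := pc_le V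
    have h2 : (pc V : ℝ) ≤ (V:ℝ) := by exact_mod_cast h
    linarith only [h2, hVubEb]
  have hlog269 : (0.6931471803:ℝ) < Real.log 2 := Real.log_two_gt_d9
  -- master inequality : log2 (Y-1) ≥ (3/5) Y + (2Eb a^4+4) a
  have hMaster : (3/5)*(Y:ℝ) + (2*Eb*a^4+4)*a ≤ Real.log 2 * ((Y:ℝ)-1) := by
    have step : Real.log 2 * ((Y:ℝ)-1) - (3/5)*((Y:ℝ)-1)
        ≥ Real.log 2 * (R-2) - (3/5)*(R-2) := by
      have hco : (0:ℝ) ≤ Real.log 2 - 3/5 := by linarith only [hlog269]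
      have hdiff : (0:ℝ) ≤ ((Y:ℝ)-1) - (R-2) := by linarith only [hYR]
      have := mul_nonneg hco hdiff
      have expand : (Real.log 2 - 3/5) * (((Y:ℝ)-1) - (R-2))
          = (Real.log 2 * ((Y:ℝ)-1) - (3/5)*((Y:ℝ)-1))
            - (Real.log 2 * (R-2) - (3/5)*(R-2)) := by ring
      linarith only [this, expand.symm.le, expand.le]
    have hc2 : Real.log 2 * (R - 2) ≥ (3/5)*(R - 1) + (2*Eb*a^4 + 5)*a := by
      rw [hR]; exact Cc2
    linarith only [step, hc2, hapos]
  -- m ≥ 3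
  have hmlY : ((3/5)*(Y:ℝ) + 2*a) ≤ (m:ℝ)*lY := by
    have h1 : (pc Y : ℝ)*lY ≥ Real.log 2 * ((Y:ℝ)-1) - lY := by linarith only [hchebY]
    have h2 : (pc V : ℝ)*lY ≤ (2*Eb*a^4+1)*a := by
      apply mul_le_mul hpcV hlYa hlYpos.le (by positivity)
    have h3 : (m:ℝ)*lY = (pc Y:ℝ)*lY - (pc V:ℝ)*lY := by rw [hmcast]; ring
    have h4 : lY ≤ a := hlYa
    linarith only [h1, h2, h3, hMaster, h4]
  have hm3 : 3 ≤ m := by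
    have hYbig : (3:ℝ)*a ≤ (3/5)*(Y:ℝ) + 2*a := by
      -- Y ≥ R - 1 ≥ 2Eb a^4+2 ≥ a  (a^4 ≥ a since a ≥ 1)
      have i1 : a ≤ a^4 := by
        calc a = a^1 := by ring
        _ ≤ a^4 := pow_le_pow_right₀ (by linarith) (by norm_num)
      have i3 : (Y:ℝ) ≥ 2*Eb*a^4+2 := by linarith only [hYR, Cc4]
      have j1 : 2*a ≤ 2*a^4 := by linarith only [i1]
      have j2 : 2*a^4 ≤ 2*Eb*a^4 := by
        have := mul_le_mul_of_nonneg_right hEb1 (by positivity : (0:ℝ) ≤ 2*a^4)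
        linarith only [this]
      have i4 : (Y:ℝ) ≥ (5/3)*a := by linarith only [j1, j2, i3, hapos]
      linarith only [i4]
    have h5 : (3:ℝ)*lY ≤ (m:ℝ)*lY := by
      have := mul_le_mul_of_nonneg_right (le_refl (3:ℝ)) hlYpos.le
      calc (3:ℝ)*lY ≤ 3*a := by linarith only [hlYa, hlYpos]
      _ ≤ (3/5)*(Y:ℝ) + 2*a := hYbig
      _ ≤ (m:ℝ)*lY := hmlY
    have h6 : (3:ℝ) ≤ (m:ℝ) := le_of_mul_le_mul_right (by linarith only [h5]) hlYpos
    exact_mod_cast h6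
  have hKm : K ≤ m := by omega
  -- (3/5)Y/lY ≤ m + 1 - K
  set Q2 := (3/5)*(Y:ℝ)/lY with hQ2
  have hQ2pos : (0:ℝ) < Q2 := by rw [hQ2]; positivity
  have hQ2m : Q2 ≤ ((m + 1 - K : ℕ):ℝ) := by
    have e1 : ((m + 1 - K : ℕ):ℝ) = (m:ℝ) + 1 - (K:ℝ) := by
      push_cast [show K ≤ m + 1 by omega]; ring
    rw [e1, hQ2]
    rw [div_le_iff₀ hlYpos]
    have hK3R : (K:ℝ) ≤ 3 := by exact_mod_cast hK3
    have h2 : ((m:ℝ) + 1 - (K:ℝ))*lY ≥ ((m:ℝ) - 2)*lY := by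
      apply mul_le_mul_of_nonneg_right ?_ hlYpos.le
      linarith only [hK3R]
    have h3 : ((m:ℝ) - 2)*lY = (m:ℝ)*lY - 2*lY := by ring
    have h4 : 2*lY ≤ 2*a := by linarith only [hlYa]
    linarith only [hmlY, h2, h3, h4]
  have hchoose : Q2^K / (Nat.factorial K : ℝ) ≤ (Nat.choose m K : ℝ) := by
    have h1 := Nat.pow_le_choose (α := ℝ) K m
    calc Q2^K / (Nat.factorial K : ℝ) ≤ ((m + 1 - K : ℕ):ℝ)^K / (Nat.factorial K : ℝ) := by
          gcongr
    _ ≤ (Nat.choose m K : ℝ) := by exact_mod_cast h1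
  -- key : lY ≤ L/K and E ≥ exp(K t)·(4/5)
  have hlogV : Real.log 2 + Real.log E + 4*Real.log a ≤ Real.log (V:ℝ) := by
    have h1 : Real.log (2*E*a^4) ≤ Real.log (V:ℝ) :=
      Real.log_le_log (by positivity) hVlb
    rw [Real.log_mul (by positivity) (by positivity),
      Real.log_mul (by norm_num) (by positivity), Real.log_pow] at h1
    push_cast at h1
    linarith only [h1]
  have hlogZ : Real.log Z = L + Real.log E := by
    rw [hZ, Real.log_mul (by positivity) hEpos.ne', hL]
  have hlogW : Real.log W ≤ L - Real.log 2 - 4*Real.log a := by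
    rw [hW, Real.log_div hZpos.ne' hVpos.ne', hlogZ]
    linarith only [hlogV]
  have hlgapos : (0:ℝ) < Real.log a := Real.log_pos (by linarith)
  have hlYL : lY * (K:ℝ) ≤ L := by
    have h1 : lY ≤ Real.log g := Real.log_le_log hYpos hYle
    have h2 : Real.log g = (K:ℝ)⁻¹ * Real.log W := by
      rw [hg, Real.log_rpow hWpos]
    have h3 : Real.log W ≤ L := by linarith only [hlogW, hlog2, hlgapos]
    have h4 : lY ≤ (K:ℝ)⁻¹ * L := by
      calc lY ≤ Real.log g := h1
      _ = (K:ℝ)⁻¹ * Real.log W := h2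
      _ ≤ (K:ℝ)⁻¹ * L := by
          apply mul_le_mul_of_nonneg_left h3 (by positivity)
    calc lY * (K:ℝ) ≤ ((K:ℝ)⁻¹ * L) * (K:ℝ) := by
          apply mul_le_mul_of_nonneg_right h4 (by positivity)
    _ = L := by field_simp
  -- lower bound on L from hcase
  have hLka : (K:ℝ)*a - (2*Real.log E + Real.log 2 + 2*Real.log a) ≤ L := by
    have h1 : Real.log ((B:ℝ)^(k+1)/(2*E*a^2)) ≤ Real.log Z :=
      Real.log_le_log (by positivity) hcase.le
    rw [Real.log_div (by positivity) (by positivity), Real.log_pow,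
      Real.log_mul (by positivity) (by positivity),
      Real.log_mul (by norm_num) (by positivity), Real.log_pow, hlogZ] at h1
    have hKcast : ((k+1 : ℕ):ℝ) = (K:ℝ) := by rw [hK]
    push_cast at h1 ⊢
    rw [← ha] at h1
    have hKR' : (K:ℝ) = (k:ℝ) + 1 := by rw [hK, Nat.cast_succ]
    rw [hKR']
    linarith only [h1]
  -- s bound
  have hlogEEb : Real.log E ≤ Real.log Eb := Real.log_le_log hEpos hEEb
  have hlogEb0 : (0:ℝ) ≤ Real.log Eb := Real.log_nonneg hEb1
  have hlogE0 : (0:ℝ) ≤ Real.log E := Real.log_nonneg hE1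
  have htub : t ≤ Real.log (3*a+1) := by
    rw [hts]
    exact Real.log_le_log (by linarith) hLub
  have hsb : (2*Real.log E + Real.log 2 + 2*Real.log a)*t/(a-1) ≤ 1/5 := by
    have h1 : (2*Real.log E + Real.log 2 + 2*Real.log a)*t
        ≤ (2*Real.log Eb + Real.log 2 + 2*Real.log a)*Real.log (3*a+1) := by
      apply mul_le_mul (by linarith only [hlogEEb]) htub htpos.le
        (by linarith only [hlogEb0, hlog2, hlgapos])
    have h2 := div_le_div_of_nonneg_right h1 ha1.le
    calc (2*Real.log E + Real.log 2 + 2*Real.log a)*t/(a-1)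
        ≤ (2*Real.log Eb + Real.log 2 + 2*Real.log a)*Real.log (3*a+1)/(a-1) := h2
    _ ≤ 1/5 := Cc5
  -- E ≥ exp(Kt) * 4/5
  have hEexp : Real.exp ((K:ℝ)*t) * (4/5) ≤ E := by
    have h1 : (K:ℝ)*t - 1/5 ≤ L*t/(a-1) := by
      set S := 2*Real.log E + Real.log 2 + 2*Real.log a with hS
      have hS0 : (0:ℝ) ≤ S := by rw [hS]; linarith only [hlogE0, hlog2.le, hlgapos.le]
      have h2 : ((K:ℝ)*a - S)*t ≤ L*t := mul_le_mul_of_nonneg_right hLka htpos.le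
      have h3 : ((K:ℝ)*a - S)*t/(a-1) ≤ L*t/(a-1) := div_le_div_of_nonneg_right h2 ha1.le
      have h4 : ((K:ℝ)*a - S)*t/(a-1) = (K:ℝ)*t*(a/(a-1)) - S*t/(a-1) := by
        field_simp
      have h5 : (K:ℝ)*t ≤ (K:ℝ)*t*(a/(a-1)) := by
        have i1 : (1:ℝ) ≤ a/(a-1) := by
          rw [le_div_iff₀ ha1]
          linarith
        have := mul_le_mul_of_nonneg_left i1 (by positivity : (0:ℝ) ≤ (K:ℝ)*t)
        calc (K:ℝ)*t = (K:ℝ)*t*1 := by ring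
        _ ≤ (K:ℝ)*t*(a/(a-1)) := by linarith only [this]
      have h6 : S*t/(a-1) ≤ 1/5 := hsb
      linarith only [h2, h3, h4.le, h4.ge, h5, h6]
    calc Real.exp ((K:ℝ)*t) * (4/5) ≤ Real.exp ((K:ℝ)*t) * Real.exp (-(1/5)) := by
          apply mul_le_mul_of_nonneg_left ?_ (Real.exp_pos _).le
          have := Real.add_one_le_exp (-(1/5):ℝ)
          linarith only [this]
    _ = Real.exp ((K:ℝ)*t - 1/5) := by rw [← Real.exp_add]; ring_nf
    _ ≤ Real.exp (L*t/(a-1)) := Real.exp_le_exp.2 h1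
    _ = E := hE.symm
  -- (L/K)^K = exp(Kt)/K^K
  have hLKpos : (0:ℝ) < L/(K:ℝ) := by positivity
  have hLK : (L/(K:ℝ))^K = Real.exp ((K:ℝ)*t) / (K:ℝ)^K := by
    have h1 : (L/(K:ℝ))^K = Real.exp ((K:ℝ) * Real.log (L/(K:ℝ))) := by
      rw [← Real.exp_log (pow_pos hLKpos K), Real.log_pow]
    rw [h1, Real.log_div (by positivity) hKne, ← hts, mul_sub, Real.exp_sub]
    congr 1
    rw [← Real.exp_log (show (0:ℝ) < (K:ℝ)^K by positivity), Real.log_pow]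
  -- key inequality
  have hkey : (101/100)*(Nat.factorial K : ℝ)*lY^K ≤ 2*E*(59/100)^K := by
    have h1 : lY^K ≤ (L/(K:ℝ))^K := by
      apply pow_le_pow_left₀ hlYpos.le
      rw [le_div_iff₀ hKpos]
      linarith only [hlYL]
    have h2 : (101/100)*(Nat.factorial K : ℝ) ≤ (8/5)*(59/100)^K*(K:ℝ)^K :=
      keynum K hK2 hK3
    have h3 : 2*E*(59/100)^K ≥ 2*(Real.exp ((K:ℝ)*t)*(4/5))*(59/100)^K := by
      apply mul_le_mul_of_nonneg_right ?_ (by positivity)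
      linarith only [hEexp]
    have h4 : (101/100)*(Nat.factorial K : ℝ)*lY^K
        ≤ (101/100)*(Nat.factorial K : ℝ)*(Real.exp ((K:ℝ)*t) / (K:ℝ)^K) := by
      apply mul_le_mul_of_nonneg_left ?_ (by positivity)
      rw [← hLK]
      exact h1
    have h5 : (101/100)*(Nat.factorial K : ℝ)*(Real.exp ((K:ℝ)*t) / (K:ℝ)^K)
        ≤ ((8/5)*(59/100)^K*(K:ℝ)^K)*(Real.exp ((K:ℝ)*t) / (K:ℝ)^K) := by
      apply mul_le_mul_of_nonneg_right h2 (by positivity)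
    have h6 : ((8/5)*(59/100)^K*(K:ℝ)^K)*(Real.exp ((K:ℝ)*t) / (K:ℝ)^K)
        = 2*(Real.exp ((K:ℝ)*t)*(4/5))*(59/100)^K := by
      field_simp
      ring
    linarith only [h3, h4, h5, h6.le, h6.ge]
  -- final count chain
  have hMZ : (M:ℝ) = Z/(2*E) := by rw [hZ]; field_simp
  have hfinal : (M:ℝ) < (V:ℝ) * (Nat.choose m K : ℝ) := by
    have hYg : (59/100)*g ≤ (3/5)*(Y:ℝ) := by
      -- Y ≥ g - 1 ≥ g(1 - 1/R) ≥ g·(99/100)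
      have h1 : g*(1/R) ≥ 1 := by
        rw [ge_iff_le, ← div_eq_mul_one_div, le_div_iff₀ hRpos]
        linarith only [hRg]
      have h2 : (Y:ℝ) ≥ g - g*(1/R) := by linarith only [hYgt, h1]
      have h3 : g*(1/R) ≤ g*(1/100) := by
        apply mul_le_mul_of_nonneg_left ?_ hgpos.le
        rw [div_le_div_iff₀ hRpos (by norm_num)]
        linarith only [hR100]
      have h4 : (Y:ℝ) ≥ (99/100)*g := by linarith only [h2, h3]
      linarith only [h4, hgpos]
    have hc1 : ((59/100)*g/lY)^K/(Nat.factorial K : ℝ) ≤ Q2^K/(Nat.factorial K : ℝ) := by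
      have hb1 : (59/100)*g/lY ≤ Q2 := by
        rw [hQ2]
        exact div_le_div_of_nonneg_right hYg hlYpos.le
      have hb2 : ((59/100)*g/lY)^K ≤ Q2^K := pow_le_pow_left₀ (by positivity) hb1 K
      exact div_le_div_of_nonneg_right hb2 (by positivity)
    have hc2 : (V:ℝ)*(((59/100)*g/lY)^K/(Nat.factorial K : ℝ)) ≤ (V:ℝ)*(Nat.choose m K : ℝ) := by
      apply mul_le_mul_of_nonneg_left ?_ hVpos.le
      exact le_trans hc1 hchoose
    have he1 : (V:ℝ)*(((59/100)*g/lY)^K/(Nat.factorial K : ℝ))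
        = (59/100)^K*Z/(lY^K*(Nat.factorial K : ℝ)) := by
      have hgKW : g^K = W := hgK
      have : ((59/100)*g/lY)^K = (59/100)^K*W/lY^K := by
        rw [div_pow, mul_pow, hgKW]
      rw [this]
      rw [hW]
      field_simp
    -- now (59/100)^K*Z/(lY^K*K!) ≥ (101/100)*(Z/(2E)) = (101/100) M
    have hc3 : (101/100)*(M:ℝ) ≤ (59/100)^K*Z/(lY^K*(Nat.factorial K : ℝ)) := by
      rw [hMZ]
      have e0 : (101/100:ℝ)*(Z/(2*E)) = (101/100)*Z/(2*E) := by ring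
      rw [e0, div_le_div_iff₀ (by positivity) (by positivity)]
      -- (101/100)*Z*(lY^K*K!) ≤ (59/100)^K*Z*(2E)
      have h7 := mul_le_mul_of_nonneg_left hkey hZpos.le
      calc (101/100)*Z*(lY^K*(Nat.factorial K : ℝ))
          = Z*((101/100)*(Nat.factorial K : ℝ)*lY^K) := by ring
      _ ≤ Z*(2*E*(59/100)^K) := h7
      _ = (59/100)^K*Z*(2*E) := by ring
    have hMlt : (M:ℝ) < (101/100)*(M:ℝ) := by
      have : (0:ℝ) < (M:ℝ) := by linarith only [hMR]
      linarith only [this]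
    linarith only [hMlt, hc3, he1.le, he1.ge, hc2]
  have hlt : M < V * Nat.choose m K := by
    have h : ((M:ℕ):ℝ) < ((V * Nat.choose m K : ℕ):ℝ) := by push_cast; exact hfinal
    exact_mod_cast h
  calc M < V * Nat.choose m K := hlt
  _ ≤ PsiNat p B := hPsi

set_option maxHeartbeats 1000000 in
lemma core (B M p : ℕ) (a Eb : ℝ)
    (ha : a = Real.log B) (hEb : Eb = Real.exp ((3*a+1)*Real.log (3*a+1)/(a-1)))
    (hBM : B ≤ M) (hMB3 : M ≤ B^3)
    (ha20 : 20 ≤ a) (hB8 : 8 ≤ B)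
    (hp : (2*(M:ℝ)*(Real.log (2*M)) ^ ((Real.log (2*M))/(-1 + Real.log B)) : ℝ) + 2 < p)
    (C1 : Real.log 2 * ((B:ℝ) - 1) * (2*a) ≥ ((3/5)*(B:ℝ) + 6*a)*(2*a) + B)
    (Cc2 : Real.log 2 * ((B:ℝ)/(3*Eb*a^3) - 2)
      ≥ (3/5)*((B:ℝ)/(3*Eb*a^3) - 1) + (2*Eb*a^4 + 5)*a)
    (Cc3 : (B:ℝ)/(3*Eb*a^3) ≥ 100)
    (Cc4 : (B:ℝ)/(3*Eb*a^3) ≥ 2*Eb*a^4 + 3)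
    (Cc5 : (2*Real.log Eb + Real.log 2 + 2*Real.log a)*Real.log (3*a+1)/(a-1) ≤ 1/5)
    (C7 : 4*Eb^2*a^2 ≤ (B:ℝ)) :
    M < PsiNat p B := by
  have hapos : (0:ℝ) < a := by linarith
  have ha1 : (0:ℝ) < a - 1 := by linarith
  have hB2 : 2 ≤ B := by omega
  have hMpos : (0:ℕ) < M := by omega
  have hBpos : (0:ℝ) < B := by
    have : (0:ℕ) < B := by omega
    exact_mod_cast this
  have hMR : (8:ℝ) ≤ (M:ℝ) := by exact_mod_cast (by omega : 8 ≤ M)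
  set L := Real.log (2*(M:ℝ)) with hL
  set t := Real.log L with ht
  set E := Real.exp (L * t / (a-1)) with hE
  set Z := 2*(M:ℝ)*E with hZ
  have hlog2 : (0:ℝ) < Real.log 2 := Real.log_pos (by norm_num)
  have hLlb : a + Real.log 2 ≤ L := by
    rw [hL, ha]
    have h1 : (B:ℝ) ≤ (M:ℝ) := by exact_mod_cast hBM
    have h2 : Real.log (2*(B:ℝ)) ≤ Real.log (2*M) :=
      Real.log_le_log (by linarith) (by linarith)
    rw [Real.log_mul (by norm_num) (by linarith)] at h2
    linarith
  have hLpos : (0:ℝ) < L := by linarith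
  have htpos : (0:ℝ) < t := Real.log_pos (by linarith)
  have hEpos : (0:ℝ) < E := Real.exp_pos _
  have hE1 : (1:ℝ) ≤ E := Real.one_le_exp (by positivity)
  -- identify Z with the rpow expression
  have hZrpow : (2*(M:ℝ)*(Real.log (2*M)) ^ ((Real.log (2*M))/(-1 + Real.log B)) : ℝ) = Z := by
    rw [hZ, hE]
    congr 1
    rw [Real.rpow_def_of_pos hLpos, ← ha, ← hL, ← ht]
    congr 1
    rw [show (-1 + a) = a - 1 by ring]
    rw [div_eq_mul_inv, div_eq_mul_inv]
    ring
  rw [hZrpow] at hp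
  -- L ≤ 3a+1
  have hLub : L ≤ 3*a+1 := by
    rw [hL]
    have h1 : (M:ℝ) ≤ (B:ℝ)^3 := by exact_mod_cast hMB3
    have h2 : Real.log (2*(M:ℝ)) ≤ Real.log (2*(B:ℝ)^3) :=
      Real.log_le_log (by positivity) (by linarith)
    have e : Real.log (2*(B:ℝ)^3) = Real.log 2 + 3*a := by
      rw [Real.log_mul (by norm_num) (by positivity), Real.log_pow, ha]
      push_cast
      ring
    have hlog2u : Real.log 2 < 1 := by
      have := Real.log_lt_sub_one_of_pos (by norm_num : (0:ℝ) < 2) (by norm_num : (2:ℝ) ≠ 1)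
      linarith
    rw [e] at h2
    linarith
  -- E ≤ Eb
  have hEb1 : (1:ℝ) ≤ Eb := by
    rw [hEb]
    apply Real.one_le_exp
    have h3a : (0:ℝ) < 3*a+1 := by linarith
    have := Real.log_nonneg (by linarith : (1:ℝ) ≤ 3*a+1)
    positivity
  have hEEb : E ≤ Eb := by
    rw [hE, hEb]
    apply Real.exp_le_exp.2
    apply div_le_div_of_nonneg_right ?_ ha1.le
    have h1 : t ≤ Real.log (3*a+1) := by
      rw [ht]
      exact Real.log_le_log hLpos hLub
    apply mul_le_mul hLub h1 htpos.le (by linarith)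
  -- k
  set k := Nat.log B (2*M) with hk
  have h2M1 : 2*M ≠ 0 := by omega
  have hbkN : B^k ≤ 2*M := Nat.pow_log_le_self B h2M1
  have hbk1N : 2*M < B^(k+1) := Nat.lt_pow_succ_log_self (by omega) (2*M)
  have hbk : ((B:ℝ))^k ≤ 2*(M:ℝ) := by exact_mod_cast hbkN
  have hbk1 : 2*(M:ℝ) < (B:ℝ)^(k+1) := by exact_mod_cast hbk1N
  have hk1 : 1 ≤ k := by
    have : B^1 ≤ 2*M := by simpa using (show B ≤ 2*M by omega)
    exact (Nat.le_log_iff_pow_le (by omega) h2M1).2 this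
  have hk3 : k ≤ 3 := by
    by_contra hcon
    have h4 : 4 ≤ k := by omega
    have : B^4 ≤ B^k := Nat.pow_le_pow_right (by omega) h4
    have hcon2 : B^4 ≤ 2*M := le_trans this hbkN
    have : 2*M ≤ 2*B^3 := by omega
    have hcon3 : B^4 ≤ 2*B^3 := by omega
    have : B^4 = B*B^3 := by ring
    have hB3pos : 0 < B^3 := by positivity
    nlinarith [hB3pos, hB2, hcon3]
  by_cases hsplit : Z / ((B:ℝ))^k ≤ (B:ℝ)/(2*E*a^2)
  · exact floor_case B M p k a L E Z ha hL hE hZ hB8 hBM ha20 hk1 hk3 hbk hsplit hp C1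
  · push_neg at hsplit
    have hcase : (B:ℝ)^(k+1)/(2*E*a^2) < Z := by
      have h2 := mul_lt_mul_of_pos_right hsplit (show (0:ℝ) < (B:ℝ)^k by positivity)
      have e1 : Z/(B:ℝ)^k*(B:ℝ)^k = Z :=
        div_mul_cancel₀ Z (by positivity : ((B:ℝ)^k) ≠ 0)
      have e2 : (B:ℝ)/(2*E*a^2)*(B:ℝ)^k = (B:ℝ)^(k+1)/(2*E*a^2) := by
        rw [pow_succ]
        ring
      rw [e1, e2] at h2
      exact h2
    have hk2 : k ≤ 2 := by
      by_contra hcon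
      have hkeq : k = 3 := by omega
      rw [hkeq] at hcase
      -- Z = 2ME ≤ 2B³E ; B⁴/(2Ea²) < Z ⇒ B < 4E²a² ≤ 4Eb²a² ≤ B
      have h1 : Z ≤ 2*(B:ℝ)^3*E := by
        rw [hZ]
        have : (M:ℝ) ≤ (B:ℝ)^3 := by exact_mod_cast hMB3
        have := mul_le_mul_of_nonneg_right (by linarith : 2*(M:ℝ) ≤ 2*(B:ℝ)^3) hEpos.le
        linarith only [this]
      have h2 : (B:ℝ)^(3+1) < 2*(B:ℝ)^3*E*(2*E*a^2) := by
        rw [div_lt_iff₀ (by positivity)] at hcase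
        calc (B:ℝ)^(3+1) < Z*(2*E*a^2) := hcase
        _ ≤ 2*(B:ℝ)^3*E*(2*E*a^2) := by
            exact mul_le_mul_of_nonneg_right h1 (by positivity)
      have h3 : (B:ℝ) < 4*E^2*a^2 := by
        have e3 : (B:ℝ)^(3+1) = (B:ℝ)^3*(B:ℝ) := by ring
        have e4 : 2*(B:ℝ)^3*E*(2*E*a^2) = (B:ℝ)^3*(4*E^2*a^2) := by ring
        rw [e3, e4] at h2
        exact lt_of_mul_lt_mul_left h2 (by positivity)
      have h4 : 4*E^2*a^2 ≤ 4*Eb^2*a^2 := by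
        have hsq : E^2 ≤ Eb^2 := by
          apply pow_le_pow_left₀ hEpos.le hEEb
        have := mul_le_mul_of_nonneg_right hsq (by positivity : (0:ℝ) ≤ 4*a^2)
        calc 4*E^2*a^2 = E^2*(4*a^2) := by ring
        _ ≤ Eb^2*(4*a^2) := this
        _ = 4*Eb^2*a^2 := by ring
      linarith only [h3, h4, C7]
    exact ceil_case B M p k a L E Z Eb ha hL hE hZ hB8 hBM ha20 hk1 hk2 hbk1 hcase hp
      hEEb hEb1 hLub Cc2 Cc3 Cc4 Cc5

set_option maxHeartbeats 1000000 in
lemma conds_eventually : ∀ᶠ x in atTop,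
    let X := Real.exp x
    let T := Real.log (3*x+1)
    let Eb := Real.exp ((3*x+1)*T/(x-1))
    (20 ≤ x) ∧ (8 ≤ X) ∧
    (Real.log 2 * (X - 1) * (2*x) ≥ ((3/5)*X + 6*x)*(2*x) + X) ∧
    (Real.log 2 * (X/(3*Eb*x^3) - 2) ≥ (3/5)*(X/(3*Eb*x^3) - 1) + (2*Eb*x^4 + 5)*x) ∧
    (X/(3*Eb*x^3) ≥ 100) ∧
    (X/(3*Eb*x^3) ≥ 2*Eb*x^4 + 3) ∧
    ((2*Real.log Eb + Real.log 2 + 2*Real.log x)*T/(x-1) ≤ 1/5) ∧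
    (4*Eb^2*x^2 ≤ X) := by
  have F1 : ∀ᶠ x : ℝ in atTop, (10:ℝ)^9 ≤ Real.exp x / x^16 :=
    (Real.tendsto_exp_div_pow_atTop 16).eventually_ge_atTop _
  have F2 : ∀ᶠ x : ℝ in atTop, (10:ℝ)^7 ≤ x := eventually_ge_atTop _
  filter_upwards [F1, F2] with x hX16 hx7
  intro X T Eb
  have hx0 : (0:ℝ) < x := by linarith
  have hx1 : (1:ℝ) < x := by linarith
  have hx20 : (20:ℝ) ≤ x := by linarith
  have hx16pos : (0:ℝ) < x^16 := by positivity
  have hXlb : (10:ℝ)^9 * x^16 ≤ X := by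
    rw [le_div_iff₀ hx16pos] at hX16
    exact hX16
  have hXlb' : (1000000000:ℝ) * x^16 ≤ X := by
    have : ((10:ℝ)^9) = 1000000000 := by norm_num
    linarith only [hXlb, this.le, this.ge]
  have hXpos : (0:ℝ) < X := Real.exp_pos x
  have hx3a : (0:ℝ) < 3*x+1 := by linarith
  have hTpos : (0:ℝ) < T := Real.log_pos (by linarith)
  -- T ≤ 4 * (3x+1)^(1/4), T^2 ≤ 32 √x
  have hT2 : T^2 ≤ 32 * Real.sqrt x := by
    have h1 : T = 4 * Real.log (Real.sqrt (Real.sqrt (3*x+1))) := by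
      rw [Real.log_sqrt (Real.sqrt_nonneg _), Real.log_sqrt hx3a.le]
      ring
    have h2 : Real.log (Real.sqrt (Real.sqrt (3*x+1))) ≤ Real.sqrt (Real.sqrt (3*x+1)) := by
      have := Real.log_le_sub_one_of_pos (show (0:ℝ) < Real.sqrt (Real.sqrt (3*x+1)) by
        positivity)
      linarith
    have h3 : T ≤ 4 * Real.sqrt (Real.sqrt (3*x+1)) := by
      rw [h1]; linarith
    have h4 : T^2 ≤ 16 * Real.sqrt (3*x+1) := by
      have e1 : (4 * Real.sqrt (Real.sqrt (3*x+1)))^2 = 16 * Real.sqrt (3*x+1) := by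
        rw [mul_pow, Real.sq_sqrt (Real.sqrt_nonneg _)]
        norm_num
      calc T^2 ≤ (4 * Real.sqrt (Real.sqrt (3*x+1)))^2 :=
            pow_le_pow_left₀ hTpos.le h3 2
      _ = 16 * Real.sqrt (3*x+1) := e1
    have h5 : Real.sqrt (3*x+1) ≤ 2 * Real.sqrt x := by
      have e2 : (2:ℝ) * Real.sqrt x = Real.sqrt (4*x) := by
        rw [show (4:ℝ)*x = 2^2*x by ring, Real.sqrt_mul (by positivity) x,
          Real.sqrt_sq (by norm_num : (0:ℝ) ≤ 2)]
      rw [e2]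
      apply Real.sqrt_le_sqrt
      linarith
    linarith
  -- log Eb ≤ 4T ; Eb ≤ 256 x^4
  have hlogEb : Real.log Eb = (3*x+1)*T/(x-1) := Real.log_exp _
  have hx1' : (0:ℝ) < x - 1 := by linarith
  have hlogEb4T : Real.log Eb ≤ 4*T := by
    rw [hlogEb, div_le_iff₀ hx1']
    have h1 : (3*x+1) ≤ 4*(x-1) := by linarith
    have := mul_le_mul_of_nonneg_right h1 hTpos.le
    calc (3*x+1)*T ≤ 4*(x-1)*T := this
    _ = 4*T*(x-1) := by ring
  have hEb256 : Eb ≤ 256*x^4 := by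
    have h1 : Eb ≤ Real.exp (4*T) := by
      rw [show Eb = Real.exp (Real.log Eb) by rw [Real.exp_log (Real.exp_pos _)]]
      exact Real.exp_le_exp.2 hlogEb4T
    have h2 : Real.exp (4*T) = (3*x+1)^4 := by
      rw [show (4:ℝ)*T = T*4 by ring, ← Real.rpow_def_of_pos hx3a]
      rw [show ((4:ℝ)) = ((4:ℕ):ℝ) by norm_num, Real.rpow_natCast]
    have h3 : (3*x+1)^4 ≤ (4*x)^4 := by
      apply pow_le_pow_left₀ hx3a.le
      linarith
    have h4 : ((4:ℝ)*x)^4 = 256*x^4 := by ring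
    linarith
  have hEb1 : (1:ℝ) ≤ Eb := Real.one_le_exp (by positivity)
  have hEbpos : (0:ℝ) < Eb := by linarith
  -- power facts
  have hp216 : x^2 ≤ x^16 := pow_le_pow_right₀ hx1.le (by norm_num)
  have hp716 : x^7 ≤ x^16 := pow_le_pow_right₀ hx1.le (by norm_num)
  have hp1516 : x^15 ≤ x^16 := pow_le_pow_right₀ hx1.le (by norm_num)
  have hp1016 : x^10 ≤ x^16 := pow_le_pow_right₀ hx1.le (by norm_num)
  have hp19 : x ≤ x^9 := by
    calc x = x^1 := (pow_one x).symm
    _ ≤ x^9 := pow_le_pow_right₀ hx1.le (by norm_num)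
  have hp91 : (1:ℝ) ≤ x^9 := one_le_pow₀ hx1.le
  have hp11 : (1:ℝ) ≤ x := hx1.le
  have hlog269 : (0.6931471803:ℝ) < Real.log 2 := Real.log_two_gt_d9
  have hlog2u : Real.log 2 < 1 := by
    have := Real.log_lt_sub_one_of_pos (by norm_num : (0:ℝ) < 2) (by norm_num : (2:ℝ) ≠ 1)
    linarith
  refine ⟨hx20, ?_, ?_, ?_, ?_, ?_, ?_, ?_⟩
  · -- 8 ≤ X
    nlinarith [hXlb, hp91, hp19, hx0]
  · -- P2
    have k0 : (0:ℝ) ≤ (X-1)*(2*x) := by nlinarith [hXlb, hx0, hx16pos]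
    have step : (0.6931471803:ℝ)*((X-1)*(2*x)) ≤ Real.log 2 * ((X-1)*(2*x)) :=
      mul_le_mul_of_nonneg_right hlog269.le k0
    have hX200 : 200*x ≤ X := by nlinarith [hXlb, hp216, hx0]
    have k1 : 12*x^2 ≤ (6/100)*(x*X) := by nlinarith [mul_le_mul_of_nonneg_left hX200 hx0.le]
    have k2 : X ≤ (6/100)*(x*X) := by nlinarith [hXpos, hx7]
    have k3 : (139/100)*x ≤ (6/100)*(x*X) := by nlinarith [hX200, hx0]
    rw [ge_iff_le]
    nlinarith [step, k1, k2, k3]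
  · -- Cc2
    have hd : (0:ℝ) < 3*Eb*x^3 := by positivity
    set R := X/(3*Eb*x^3) with hr
    have hRlb : 10^5*x^9 ≤ R := by
      rw [hr, le_div_iff₀ hd]
      have h1 : 3*Eb*x^3 ≤ 768*x^7 := by
        have := mul_le_mul_of_nonneg_right hEb256 (by positivity : (0:ℝ) ≤ x^3)
        nlinarith [this]
      have h2 : 10^5*x^9*(3*Eb*x^3) ≤ 10^5*x^9*(768*x^7) := by
        apply mul_le_mul_of_nonneg_left h1 (by positivity)
      have h3 : 10^5*x^9*(768*x^7) = 768*10^5*x^16 := by ring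
      nlinarith [h2, h3, hXlb, hp1516]
    have hR2 : (0:ℝ) ≤ R - 2 := by nlinarith [hRlb, hp91]
    have step : (0.6931471803:ℝ)*(R-2) ≤ Real.log 2 * (R-2) :=
      mul_le_mul_of_nonneg_right hlog269.le hR2
    have k1 : 2*Eb*x^4*x ≤ 512*x^9 := by
      have h1 : 2*Eb*x^4 ≤ 512*x^8 := by
        have := mul_le_mul_of_nonneg_right hEb256 (by positivity : (0:ℝ) ≤ x^4)
        nlinarith [this]
      have := mul_le_mul_of_nonneg_right h1 hx0.le
      nlinarith [this]
    rw [ge_iff_le]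
    nlinarith [step, k1, hRlb, hp19, hp91, hx0]
  · -- Cc3
    rw [ge_iff_le, le_div_iff₀ (by positivity : (0:ℝ) < 3*Eb*x^3)]
    have h1 : 3*Eb*x^3 ≤ 768*x^7 := by
      have := mul_le_mul_of_nonneg_right hEb256 (by positivity : (0:ℝ) ≤ x^3)
      nlinarith [this]
    nlinarith [h1, hXlb, hp716, hx0, hp91]
  · -- Cc4
    rw [ge_iff_le, le_div_iff₀ (by positivity : (0:ℝ) < 3*Eb*x^3)]
    have h1 : 3*Eb*x^3 ≤ 768*x^7 := by
      have := mul_le_mul_of_nonneg_right hEb256 (by positivity : (0:ℝ) ≤ x^3)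
      nlinarith [this]
    have h2 : 2*Eb*x^4 + 3 ≤ 515*x^8 := by
      have := mul_le_mul_of_nonneg_right hEb256 (by positivity : (0:ℝ) ≤ x^4)
      have h8 : (1:ℝ) ≤ x^8 := one_le_pow₀ hx1.le
      nlinarith [this, h8]
    have h3 : (2*Eb*x^4 + 3)*(3*Eb*x^3) ≤ 515*x^8*(768*x^7) := by
      apply mul_le_mul h2 h1 (by positivity) (by positivity)
    have h4 : (515:ℝ)*x^8*(768*x^7) = 395520*x^15 := by ring
    nlinarith [h3, h4, hXlb, hp1516]
  · -- Cc5
    have hlogx : Real.log x ≤ T := Real.log_le_log hx0 (by linarith)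
    have hlog2T : Real.log 2 ≤ T := by
      apply Real.log_le_log (by norm_num)
      linarith
    have hN : 2*Real.log Eb + Real.log 2 + 2*Real.log x ≤ 11*T := by
      linarith [hlogEb4T, hlogx, hlog2T]
    have hNpos : (0:ℝ) ≤ 2*Real.log Eb + Real.log 2 + 2*Real.log x := by
      have h1 : (0:ℝ) ≤ Real.log Eb := Real.log_nonneg hEb1
      have h2 : (0:ℝ) ≤ Real.log x := Real.log_nonneg hx1.le
      linarith [hlog269]
    rw [div_le_iff₀ hx1']
    have h1 : (2*Real.log Eb + Real.log 2 + 2*Real.log x)*T ≤ 11*T*T := by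
      apply mul_le_mul_of_nonneg_right hN hTpos.le
    have h2 : 11*T*T ≤ 352*Real.sqrt x := by nlinarith [hT2]
    have hsq : Real.sqrt x * Real.sqrt x = x := Real.mul_self_sqrt hx0.le
    have hsqlb : (3162:ℝ) ≤ Real.sqrt x := by
      rw [show (3162:ℝ) = Real.sqrt (3162^2) by
        rw [Real.sqrt_sq (by norm_num : (0:ℝ) ≤ 3162)]]
      apply Real.sqrt_le_sqrt
      nlinarith [hx7]
    have hsq1 : (1:ℝ) ≤ Real.sqrt x := by linarith
    have h3 : 1760*Real.sqrt x ≤ x - 1 := by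
      have h4 : (3162:ℝ)*Real.sqrt x ≤ Real.sqrt x * Real.sqrt x :=
        mul_le_mul_of_nonneg_right hsqlb (Real.sqrt_nonneg x)
      linarith only [h4, hsq, hsq1]
    linarith only [h1, h2, h3]
  · -- C7
    have h1 : Eb^2 ≤ (256*x^4)^2 := pow_le_pow_left₀ hEbpos.le hEb256 2
    have h2 : 4*Eb^2*x^2 ≤ 4*(256*x^4)^2*x^2 := by
      have := mul_le_mul_of_nonneg_right h1 (by positivity : (0:ℝ) ≤ 4*x^2)
      linarith only [this]
    have h3 : (4:ℝ)*(256*x^4)^2*x^2 = 262144*x^10 := by ring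
    linarith only [h2, h3, hXlb', hp1016, hx16pos.le]

/-- For all sufficiently large `D`, with `B = ⌈D^(1/3)⌉`, any integer `M` with
`B ≤ M ≤ D`, and `Z̃ = 2M · (log 2M)^((log 2M)/(-1 + log B))`: every prime `p`
with `Ψ(p, B) ≤ M` satisfies `p ≤ Z̃ + 2`. -/
theorem prime_le_of_smooth_count_le :
    ∃ D₀ : ℕ, ∀ D : ℕ, D₀ ≤ D → ∀ B M : ℕ,
      B = ⌈(D : ℝ) ^ ((1 : ℝ) / 3)⌉₊ → B ≤ M → M ≤ D →
      ∀ Z : ℝ,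
        Z = 2 * M * Real.log (2 * M) ^ (Real.log (2 * M) / (-1 + Real.log B)) →
        ∀ p : ℕ, p.Prime → PsiNat p B ≤ M → (p : ℝ) ≤ Z + 2 := by
  obtain ⟨A, hA⟩ := Filter.eventually_atTop.1 conds_eventually
  refine ⟨⌈Real.exp (3*A)⌉₊ + 1, ?_⟩
  intro D hD B M hBdef hBM hMD Z hZdef p hprime hpsi
  by_contra hgt
  push_neg at hgt
  -- D ≥ exp(3A)
  have hDR : Real.exp (3*A) ≤ (D:ℝ) := by
    have h1 : (⌈Real.exp (3*A)⌉₊ : ℝ) ≤ (D:ℝ) := by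
      have : ⌈Real.exp (3*A)⌉₊ ≤ D := by omega
      exact_mod_cast this
    exact le_trans (Nat.le_ceil _) h1
  have hDpos : (0:ℕ) < D := by omega
  have hDRpos : (0:ℝ) < (D:ℝ) := by exact_mod_cast hDpos
  -- exp A ≤ D^(1/3)
  have hcuberoot : Real.exp A ≤ (D:ℝ) ^ ((1:ℝ)/3) := by
    have h1 : (Real.exp (3*A)) ^ ((1:ℝ)/3) ≤ (D:ℝ) ^ ((1:ℝ)/3) :=
      Real.rpow_le_rpow (Real.exp_pos _).le hDR (by norm_num)
    have h2 : (Real.exp (3*A)) ^ ((1:ℝ)/3) = Real.exp A := by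
      rw [Real.rpow_def_of_pos (Real.exp_pos _), Real.log_exp]
      congr 1
      ring
    rwa [h2] at h1
  have hBlbR : Real.exp A ≤ (B:ℝ) := by
    rw [hBdef]
    exact le_trans hcuberoot (Nat.le_ceil _)
  have hBpos : 0 < B := by
    by_contra hb
    have : B = 0 := by omega
    rw [this] at hBlbR
    simp at hBlbR
    linarith [Real.exp_pos A]
  have hBRpos : (0:ℝ) < (B:ℝ) := by exact_mod_cast hBpos
  set a := Real.log (B:ℝ) with hadef
  have haA : A ≤ a := by
    have := Real.log_le_log (Real.exp_pos A) hBlbR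
    rwa [Real.log_exp] at this
  have hXa : Real.exp a = (B:ℝ) := Real.exp_log hBRpos
  obtain ⟨h20, h8, hP2, hc2, hc3, hc4, hc5, h7⟩ := hA a haA
  rw [hXa] at h8 hP2 hc2 hc3 hc4 h7
  -- M ≤ B^3
  have hMB3 : M ≤ B^3 := by
    have h1 : (D:ℝ) ≤ (B:ℝ)^3 := by
      have h2 : ((D:ℝ) ^ ((1:ℝ)/3))^(3:ℕ) = (D:ℝ) := by
        rw [← Real.rpow_natCast ((D:ℝ) ^ ((1:ℝ)/3)) 3, ← Real.rpow_mul hDRpos.le]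
        norm_num
      have h3 : (D:ℝ) ^ ((1:ℝ)/3) ≤ (B:ℝ) := by
        rw [hBdef]; exact Nat.le_ceil _
      calc (D:ℝ) = ((D:ℝ) ^ ((1:ℝ)/3))^(3:ℕ) := h2.symm
      _ ≤ (B:ℝ)^(3:ℕ) := pow_le_pow_left₀ (by positivity) h3 3
    have h4 : D ≤ B^3 := by exact_mod_cast h1
    omega
  have hB8 : 8 ≤ B := by exact_mod_cast h8
  -- apply core
  have hlt := core B M p a (Real.exp ((3*a+1)*Real.log (3*a+1)/(a-1))) hadef rfl hBM hMB3
    h20 hB8 (by rw [← hZdef] at *; exact hgt) hP2 hc2 hc3 hc4 hc5 h7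
  omega
end

section
/- Let D ≥ 1 and k ≥ 1 be integers, and let m₁, …, m_k be positive integers with m_i ≤ D for all i. Define M₀ = 1 and M_i = lcm(M_{i−1}, m_i) for 1 ≤ i ≤ k. Assume that m_i does not divide M_{i−1} for every 1 ≤ i ≤ k, and that M_i ≤ D for every 1 ≤ i ≤ k − 1. Then for every positive integer l, the number of indices i ∈ {1, …, k} with D/2^l < m_i ≤ D/2^(l−1) is at most l + 1. -/
/-!
Since `m_i ∤ M_{i-1}`, each `M_{i-1}` is a proper divisor of `M_i`, so `M_i ≥ 2 M_{i-1}`.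
If `t ≥ 2` indices have `m_i > D / 2^l`, then at the second-to-last of them `M` is at least
`2^(t-2)` times the smallest of these `m_i`, hence greater than `2^(t-2) D / 2^l`; as this index
is below `k`, that value of `M` is at most `D`, which forces `t - 2 < l`.
-/

open Finset

theorem Nat.two_mul_le_of_dvd_of_ne {a b : ℕ} (hab : a ∣ b) (hb : 0 < b) (hne : a ≠ b) :
    2 * a ≤ b := by
  obtain ⟨c, rfl⟩ := hab
  have hc0 : c ≠ 0 := by rintro rfl; simp at hb
  have hc1 : c ≠ 1 := by rintro rfl; simp at hne
  nlinarith [show 2 ≤ c by omega]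

structure IsStrictLcmChain (k : ℕ) (m M : ℕ → ℕ) : Prop where
  pos : ∀ i, 1 ≤ i → i ≤ k → 0 < m i
  zero : M 0 = 1
  lcm : ∀ i, 1 ≤ i → i ≤ k → M i = Nat.lcm (M (i - 1)) (m i)
  not_dvd : ∀ i, 1 ≤ i → i ≤ k → ¬ m i ∣ M (i - 1)

namespace IsStrictLcmChain

variable {k : ℕ} {m M : ℕ → ℕ}

theorem dvd_succ (h : IsStrictLcmChain k m M) {i : ℕ} (hi : 1 ≤ i) (hik : i ≤ k) :
    M (i - 1) ∣ M i :=
  h.lcm i hi hik ▸ Nat.dvd_lcm_left _ _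

theorem dvd_self (h : IsStrictLcmChain k m M) {i : ℕ} (hi : 1 ≤ i) (hik : i ≤ k) :
    m i ∣ M i :=
  h.lcm i hi hik ▸ Nat.dvd_lcm_right _ _

theorem pos_of_le (h : IsStrictLcmChain k m M) {i : ℕ} (hik : i ≤ k) : 0 < M i := by
  induction i with
  | zero => simp [h.zero]
  | succ n ih =>
    rw [h.lcm (n + 1) (by omega) hik, Nat.add_sub_cancel]
    exact Nat.lcm_pos (ih (by omega)) (h.pos (n + 1) (by omega) hik)

theorem dvd_of_le (h : IsStrictLcmChain k m M) {a b : ℕ} (hab : a ≤ b) (hbk : b ≤ k) :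
    M a ∣ M b := by
  induction b, hab using Nat.le_induction with
  | base => exact dvd_rfl
  | succ n _ ih => exact (ih (by omega)).trans (h.dvd_succ (by omega) hbk)

theorem le_of_le (h : IsStrictLcmChain k m M) {a b : ℕ} (hab : a ≤ b) (hbk : b ≤ k) :
    M a ≤ M b :=
  Nat.le_of_dvd (h.pos_of_le hbk) (h.dvd_of_le hab hbk)

theorem two_mul_le (h : IsStrictLcmChain k m M) {i : ℕ} (hi : 1 ≤ i) (hik : i ≤ k) :
    2 * M (i - 1) ≤ M i := by
  refine Nat.two_mul_le_of_dvd_of_ne (h.dvd_succ hi hik) (h.pos_of_le hik) fun heq => ?_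
  exact h.not_dvd i hi hik (heq ▸ h.dvd_self hi hik)

theorem two_pow_card_mul_le (h : IsStrictLcmChain k m M) {S : Finset ℕ} (hS : S ⊆ Icc 1 k)
    (hne : S.Nonempty) {c : ℕ} (hc : ∀ i ∈ S, c ≤ m i) {b : ℕ} (hb : ∀ i ∈ S, i ≤ b)
    (hbk : b ≤ k) : 2 ^ (#S - 1) * c ≤ M b := by
  induction S using Finset.induction_on_max generalizing b with
  | empty => simp at hne
  | insert a s hlt ih =>
    have ha : 1 ≤ a ∧ a ≤ k := mem_Icc.mp (hS (mem_insert_self a s))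
    have hab : a ≤ b := hb a (mem_insert_self a s)
    rw [card_insert_of_notMem fun has => (hlt a has).false, Nat.add_sub_cancel]
    rcases s.eq_empty_or_nonempty with rfl | hs
    · calc 2 ^ 0 * c ≤ m a := by simpa using hc a (mem_insert_self a ∅)
        _ ≤ M a := Nat.le_of_dvd (h.pos_of_le ha.2) (h.dvd_self ha.1 ha.2)
        _ ≤ M b := h.le_of_le hab hbk
    · have hprev : 2 ^ (#s - 1) * c ≤ M (a - 1) :=
        ih ((subset_insert a s).trans hS) hs (fun i hi => hc i (mem_insert_of_mem hi))
          (fun i hi => by have := hlt i hi; omega) (by omega)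
      calc 2 ^ #s * c = 2 * (2 ^ (#s - 1) * c) := by
            rw [← mul_assoc, ← pow_succ', Nat.sub_add_cancel (card_pos.mpr hs)]
        _ ≤ 2 * M (a - 1) := by gcongr
        _ ≤ M a := h.two_mul_le ha.1 ha.2
        _ ≤ M b := h.le_of_le hab hbk

theorem card_le_of_div_lt (h : IsStrictLcmChain k m M) {D l : ℕ}
    (hMD : ∀ i, 1 ≤ i → i ≤ k - 1 → M i ≤ D) {S : Finset ℕ} (hS : S ⊆ Icc 1 k)
    (hlt : ∀ i ∈ S, D / 2 ^ l < m i) : #S ≤ l + 1 := by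
  by_contra! hcard
  have hSne : S.Nonempty := card_pos.mp (by omega)
  set S' := S.erase (S.max' hSne)
  have hcard' : #S' = #S - 1 := card_erase_of_mem (S.max'_mem hSne)
  have hS'ne : S'.Nonempty := card_pos.mp (by omega)
  have hS'S : S' ⊆ S := erase_subset _ _
  set b := S'.max' hS'ne
  have hbS' : b ∈ S' := S'.max'_mem hS'ne
  have hb1 : 1 ≤ b := (mem_Icc.mp (hS (hS'S hbS'))).1
  have hbk : b ≤ k - 1 := by
    have := S.lt_max'_of_mem_erase_max' hSne hbS'
    have := (mem_Icc.mp (hS (S.max'_mem hSne))).2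
    omega
  have hgrow : 2 ^ (#S' - 1) * (D / 2 ^ l + 1) ≤ D :=
    (h.two_pow_card_mul_le (hS'S.trans hS) hS'ne (fun i hi => hlt i (hS'S hi))
      (fun i hi => S'.le_max' i hi) (by omega)).trans (hMD b hb1 hbk)
  have hpow : 2 ^ l ≤ 2 ^ (#S' - 1) := Nat.pow_le_pow_right two_pos (by omega)
  exact (calc D < 2 ^ l * (D / 2 ^ l + 1) := Nat.lt_mul_div_succ D (by positivity)
    _ ≤ 2 ^ (#S' - 1) * (D / 2 ^ l + 1) := Nat.mul_le_mul_right _ hpow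
    _ ≤ D := hgrow).false

end IsStrictLcmChain

theorem dyadic_interval_count_general (D k : ℕ) (m M : ℕ → ℕ)
    (hm : ∀ i, 1 ≤ i → i ≤ k → 0 < m i)
    (hM0 : M 0 = 1)
    (hMrec : ∀ i, 1 ≤ i → i ≤ k → M i = Nat.lcm (M (i - 1)) (m i))
    (hndvd : ∀ i, 1 ≤ i → i ≤ k → ¬ m i ∣ M (i - 1))
    (hMD : ∀ i, 1 ≤ i → i ≤ k - 1 → M i ≤ D) :
    ∀ l : ℕ, 1 ≤ l →
      {i : ℕ | 1 ≤ i ∧ i ≤ k ∧ (D : ℝ) / 2 ^ l < (m i : ℝ) ∧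
        (m i : ℝ) ≤ (D : ℝ) / 2 ^ (l - 1)}.ncard ≤ l + 1 := by
  intro l _
  have hchain : IsStrictLcmChain k m M := ⟨hm, hM0, hMrec, hndvd⟩
  set T := (Icc 1 k).filter fun i => D / 2 ^ l < m i
  have hsub : {i : ℕ | 1 ≤ i ∧ i ≤ k ∧ (D : ℝ) / 2 ^ l < (m i : ℝ) ∧
      (m i : ℝ) ≤ (D : ℝ) / 2 ^ (l - 1)} ⊆ T := by
    rintro i ⟨hi1, hik, hlow, -⟩
    have hlow' : D < m i * 2 ^ l := by
      exact_mod_cast (div_lt_iff₀ (by positivity)).mp hlow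
    exact mem_filter.mpr
      ⟨mem_Icc.mpr ⟨hi1, hik⟩, (Nat.div_lt_iff_lt_mul (by positivity)).mpr hlow'⟩
  calc _ ≤ (T : Set ℕ).ncard := Set.ncard_le_ncard hsub T.finite_toSet
    _ = #T := Set.ncard_coe_finset T
    _ ≤ l + 1 := hchain.card_le_of_div_lt hMD (filter_subset _ _) fun i hi => (mem_filter.mp hi).2

/-- Let `m₁, …, m_k ≤ D` be positive integers, `M₀ = 1` and
`M_i = lcm(M_{i-1}, m_i)`. If `m_i ∤ M_{i-1}` for all `1 ≤ i ≤ k` and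
`M_i ≤ D` for all `1 ≤ i ≤ k - 1`, then for every `l ≥ 1` the number of
indices `i ∈ {1, …, k}` with `D/2^l < m_i ≤ D/2^(l-1)` is at most `l + 1`. -/
theorem dyadic_interval_count (D k : ℕ) (hD : 1 ≤ D) (hk : 1 ≤ k) (m M : ℕ → ℕ)
    (hm : ∀ i, 1 ≤ i → i ≤ k → 0 < m i)
    (hmD : ∀ i, 1 ≤ i → i ≤ k → m i ≤ D)
    (hM0 : M 0 = 1)
    (hMrec : ∀ i, 1 ≤ i → i ≤ k → M i = Nat.lcm (M (i - 1)) (m i))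
    (hndvd : ∀ i, 1 ≤ i → i ≤ k → ¬ m i ∣ M (i - 1))
    (hMD : ∀ i, 1 ≤ i → i ≤ k - 1 → M i ≤ D) :
    ∀ l : ℕ, 1 ≤ l →
      {i : ℕ | 1 ≤ i ∧ i ≤ k ∧ (D : ℝ) / 2 ^ l < (m i : ℝ) ∧
        (m i : ℝ) ≤ (D : ℝ) / 2 ^ (l - 1)}.ncard ≤ l + 1 :=
  dyadic_interval_count_general D k m M hm hM0 hMrec hndvd hMD
end
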